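/- arXiv:math/0603387 — 11 statements merged into one kernel-verified Lean document; each statement's English description precedes it below -/
import Mathlib

section
/- Let p be an odd prime and q ∈ 1 + pℤ_p with q ≠ 1. Then ι_q : ℤ_p → ℤ_p is a bijective isometry: it is bijective and satisfies |ι_q(z) − ι_q(z')|_p = |z − z'|_p for all z, z' ∈ ℤ_p. -/
/-!
The key fact is the `p`-adic lifting-the-exponent identity `‖S_q(n)‖ = ‖n‖`, where
`S_q(n) = 1 + q + ⋯ + q ^ (n - 1) = ι(n)`, for `p` odd and `q ≡ 1 mod p`: when `p ∤ n` both
sides are units, and otherwise one splits `S_q(p m) = S_q(p) · S_{q^p}(m)` and uses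
`S_q(p) ≡ p mod p²`. Since `ι(n + k) - ι(n) = q ^ n · S_q(k)` with `q` a unit, `ι` is isometric
on `ℕ`, hence on `ℤ_p` by density and continuity; and an isometric self-map of a compact metric
space is onto.
-/

open Finset

theorem geom_sum_add {R : Type*} [Semiring R] (x : R) (m n : ℕ) :
    ∑ i ∈ range (m + n), x ^ i = ∑ i ∈ range m, x ^ i + x ^ m * ∑ i ∈ range n, x ^ i := by
  simp only [sum_range_add, mul_sum, pow_add]

theorem geom_sum_mul_range {R : Type*} [CommSemiring R] (x : R) (m n : ℕ) :
    ∑ i ∈ range (m * n), x ^ i = (∑ i ∈ range m, x ^ i) * ∑ i ∈ range n, (x ^ m) ^ i := by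
  induction n with
  | zero => simp
  | succ n ih => rw [mul_add_one, geom_sum_add, ih, sum_range_succ, ← pow_mul]; ring

theorem norm_eq_of_norm_sub_lt {E : Type*} [SeminormedAddCommGroup E] [IsUltrametricDist E]
    {a b : E} (h : ‖a - b‖ < ‖b‖) : ‖a‖ = ‖b‖ := by
  rw [← add_sub_cancel b a, IsUltrametricDist.norm_add_eq_max_of_norm_ne_norm h.ne',
    max_eq_left h.le]

namespace PadicInt

variable {p : ℕ} [Fact p.Prime]

theorem norm_eq_one_iff_not_dvd {x : ℤ_[p]} : ‖x‖ = 1 ↔ ¬ (p : ℤ_[p]) ∣ x := by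
  rw [← norm_lt_one_iff_dvd, not_lt]
  exact ⟨ge_of_eq, (norm_le_one x).antisymm⟩

theorem norm_eq_one_of_dvd_sub_one {q : ℤ_[p]} (hq : (p : ℤ_[p]) ∣ q - 1) : ‖q‖ = 1 :=
  norm_eq_one_iff_not_dvd.mpr fun h => prime_p.not_dvd_one ((dvd_iff_dvd_of_dvd_sub hq).mp h)

theorem natCast_dvd_natCast_iff {n : ℕ} : (p : ℤ_[p]) ∣ n ↔ p ∣ n := by
  simpa [Int.natCast_dvd_natCast] using pow_p_dvd_int_iff (p := p) 1 n

variable {q : ℤ_[p]} (hq : (p : ℤ_[p]) ∣ q - 1)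
include hq

theorem norm_geom_sum_of_not_dvd {n : ℕ} (hn : ¬ p ∣ n) :
    ‖∑ i ∈ range n, q ^ i‖ = ‖(n : ℤ_[p])‖ := by
  have hdvd := dvd_geom_sum₂_iff_of_dvd_sub (n := n) hq
  rw [geom_sum₂_with_one, one_pow, mul_one] at hdvd
  rw [← natCast_dvd_natCast_iff] at hn
  rw [norm_eq_one_iff_not_dvd.mpr hn, norm_eq_one_iff_not_dvd.mpr (hdvd.not.mpr hn)]

theorem norm_geom_sum_prime (hp : Odd p) : ‖∑ i ∈ range p, q ^ i‖ = ‖(p : ℤ_[p])‖ := by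
  obtain ⟨b, hb⟩ := hq
  have hsq := odd_sq_dvd_geom_sum₂_sub 1 b hp (R := ℤ_[p])
  rw [← hb, add_sub_cancel, geom_sum₂_with_one, one_pow, mul_one] at hsq
  obtain ⟨c, hc⟩ := hsq
  have hp0 : 0 < ‖(p : ℤ_[p])‖ := norm_pos_iff.mpr prime_p.ne_zero
  refine norm_eq_of_norm_sub_lt ?_
  calc ‖∑ i ∈ range p, q ^ i - p‖ = ‖(p : ℤ_[p])‖ ^ 2 * ‖c‖ := by rw [hc, norm_mul, norm_pow]
    _ ≤ ‖(p : ℤ_[p])‖ ^ 2 := mul_le_of_le_one_right (by positivity) (norm_le_one c)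
    _ < ‖(p : ℤ_[p])‖ := pow_lt_self_of_lt_one₀ hp0 ((norm_lt_one_iff_dvd _).mpr dvd_rfl) one_lt_two

theorem norm_geom_sum (hp : Odd p) (n : ℕ) : ‖∑ i ∈ range n, q ^ i‖ = ‖(n : ℤ_[p])‖ := by
  induction n using Nat.strong_induction_on generalizing q with
  | _ n ih =>
    by_cases hn : p ∣ n
    · obtain ⟨m, rfl⟩ := hn
      rcases m.eq_zero_or_pos with rfl | hm
      · simp
      have hqp : (p : ℤ_[p]) ∣ q ^ p - 1 := hq.trans (sub_one_dvd_pow_sub_one q p)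
      rw [geom_sum_mul_range, norm_mul, norm_geom_sum_prime hq hp, ih m _ hqp, Nat.cast_mul,
        norm_mul]
      exact lt_mul_left hm (Fact.out : p.Prime).one_lt
    · exact norm_geom_sum_of_not_dvd hq hn

theorem norm_geom_sum_sub_geom_sum (hp : Odd p) (m n : ℕ) :
    ‖∑ i ∈ range m, q ^ i - ∑ i ∈ range n, q ^ i‖ = ‖(m : ℤ_[p]) - n‖ := by
  wlog hnm : n ≤ m generalizing m n
  · rw [norm_sub_rev, this n m (by omega), norm_sub_rev]
  obtain ⟨k, rfl⟩ := Nat.exists_eq_add_of_le hnm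
  rw [geom_sum_add, add_sub_cancel_left, norm_mul, norm_pow, norm_eq_one_of_dvd_sub_one hq, one_pow,
    one_mul, norm_geom_sum hq hp, Nat.cast_add, add_sub_cancel_left]

end PadicInt

theorem Isometry.surjective_of_compactSpace {X : Type*} [MetricSpace X] [CompactSpace X]
    {f : X → X} (hf : Isometry f) : Function.Surjective f := by
  intro y
  suffices y ∈ closure (Set.range f) by
    rwa [(isCompact_range hf.continuous).isClosed.closure_eq] at this
  refine Metric.mem_closure_iff.mpr fun ε hε => ?_
  obtain ⟨x, -, φ, hφ, hconv⟩ :=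
    isCompact_univ.tendsto_subseq (x := fun n => f^[n] y) fun n => Set.mem_univ _
  obtain ⟨N, hN⟩ := Metric.cauchySeq_iff'.mp hconv.cauchySeq ε hε
  obtain ⟨k, hk⟩ : ∃ k, φ (N + 1) = φ N + (k + 1) :=
    ⟨φ (N + 1) - φ N - 1, by have : φ N < φ (N + 1) := hφ (by omega); omega⟩
  refine ⟨f^[k + 1] y, ⟨f^[k] y, (f.iterate_succ_apply' k y).symm⟩, ?_⟩
  have hiter : Isometry f^[φ N] := by
    induction φ N with
    | zero => exact isometry_id
    | succ n ih => rw [Function.iterate_succ]; exact ih.comp hf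
  -- two ε-close terms of the subsequence, pulled back along the isometry `f^[φ N]`
  have := hN (N + 1) N.le_succ
  rwa [Function.comp_apply, Function.comp_apply, hk, Function.iterate_add_apply, hiter.dist_eq,
    dist_comm] at this

theorem isometry_of_denseRange {α X Y : Type*} [PseudoMetricSpace X] [PseudoMetricSpace Y]
    {u : α → X} (hu : DenseRange u) {f : X → Y} (hf : Continuous f)
    (h : ∀ a b, dist (f (u a)) (f (u b)) = dist (u a) (u b)) : Isometry f := by
  refine Isometry.of_dist_eq fun x y => ?_
  have hF : Continuous fun z : X × X => dist (f z.1) (f z.2) := by fun_prop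
  exact congrFun
    ((hu.prodMap hu).equalizer hF continuous_dist (funext fun ab => h ab.1 ab.2)) (x, y)

theorem iota_bijective_isometry_general (p : ℕ) [Fact p.Prime] (hp : Odd p)
    (q : ℤ_[p]) (hq : (p : ℤ_[p]) ∣ q - 1)
    (ι : ℤ_[p] → ℤ_[p]) (hcont : Continuous ι)
    (hval : ∀ n : ℕ, ι n = ∑ i ∈ Finset.range n, q ^ i) :
    Function.Bijective ι ∧ ∀ z z' : ℤ_[p], ‖ι z - ι z'‖ = ‖z - z'‖ := by
  have hiso : Isometry ι := isometry_of_denseRange PadicInt.denseRange_natCast hcont fun m n => by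
    simpa only [dist_eq_norm, hval] using PadicInt.norm_geom_sum_sub_geom_sum hq hp m n
  refine ⟨⟨hiso.injective, hiso.surjective_of_compactSpace⟩, fun z z' => ?_⟩
  simpa only [dist_eq_norm] using hiso.dist_eq z z'

/-- For `p` odd and `q ∈ 1 + pℤ_p`, `q ≠ 1`, the interpolation `ι_q : ℤ_p → ℤ_p`
is a bijective isometry. -/
theorem iota_bijective_isometry (p : ℕ) [Fact p.Prime] (hp : Odd p)
    (q : ℤ_[p]) (hq : (p : ℤ_[p]) ∣ q - 1) (hq1 : q ≠ 1)
    (ι : ℤ_[p] → ℤ_[p]) (hcont : Continuous ι)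
    (hval : ∀ n : ℕ, ι n = ∑ i ∈ Finset.range n, q ^ i) :
    Function.Bijective ι ∧ ∀ z z' : ℤ_[p], ‖ι z - ι z'‖ = ‖z - z'‖ :=
  iota_bijective_isometry_general p hp q hq ι hcont hval
end

section
/- Let q ∈ ℤ_2^× with q ≡ 3 (mod 4), and set l_0 = v_2(q + 1). Then the image of ι_q : ℤ_2 → ℤ_2 is 2^{l_0}ℤ_2 ∪ (1 + 2^{l_0}ℤ_2). -/
/-!
Write `S n = 1 + q + ⋯ + q ^ (n - 1)` and `q + 1 = 2 ^ l₀ * u` with `u` a unit. Since `q - 1` is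
even, `2 ^ (l₀ + 1)` divides `q ^ 2 - 1`, so `S (2 * m) = (1 + q) * (1 + q ^ 2 + ⋯)` lies in
`2 ^ l₀ ℤ₂` and `S (2 * m + 1) = S (2 * m) + q ^ (2 * m)` in `1 + 2 ^ l₀ ℤ₂`; this set is closed and
`ℕ` is dense in `ℤ₂`, so it contains the range of `ι`.

Conversely `S (2 ^ (k + 1)) = (1 + q) (1 + q ^ 2) ⋯ (1 + q ^ 2 ^ k)` is `2 ^ (l₀ + k)` times a unit,
because `1 + r ^ 2` is twice a unit for odd `r`. As `S (m + n) = S m + q ^ m * S n`, a partial sum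
approximating `y ∈ 2 ^ l₀ ℤ₂` modulo `2 ^ (l₀ + k)` can be corrected to one modulo
`2 ^ (l₀ + k + 1)`, and `S (m + 1) = 1 + q * S m` transfers this to `1 + 2 ^ l₀ ℤ₂`. The range of
`ι` is compact, hence closed, so it contains every such limit.
-/

open Finset

section GeomSum

variable {R : Type*} [CommSemiring R]

theorem geom_sum_range_add (q : R) (m n : ℕ) :
    ∑ i ∈ range (m + n), q ^ i = ∑ i ∈ range m, q ^ i + q ^ m * ∑ i ∈ range n, q ^ i := by
  simp only [sum_range_add, pow_add, mul_sum]

theorem geom_sum_range_two_mul (q : R) (m : ℕ) :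
    ∑ i ∈ range (2 * m), q ^ i = (1 + q) * ∑ i ∈ range m, (q ^ 2) ^ i := by
  induction m with
  | zero => simp
  | succ m ih =>
    rw [mul_add_one, sum_range_succ, sum_range_succ, ih, sum_range_succ, ← pow_mul]
    ring

theorem geom_sum_range_two_pow_succ (q : R) (k : ℕ) :
    ∑ i ∈ range (2 ^ (k + 1)), q ^ i = (1 + q ^ 2 ^ k) * ∑ i ∈ range (2 ^ k), q ^ i := by
  rw [pow_succ, mul_two, geom_sum_range_add]
  ring

end GeomSum

namespace PadicInt

variable {p : ℕ} [Fact p.Prime]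

theorem pow_dvd_iff_norm_le {n : ℕ} {x : ℤ_[p]} :
    (p : ℤ_[p]) ^ n ∣ x ↔ ‖x‖ ≤ (p : ℝ) ^ (-n : ℤ) := by
  rw [norm_le_pow_iff_mem_span_pow, Ideal.mem_span_singleton]

theorem isClosed_setOf_pow_dvd_sub (n : ℕ) (c : ℤ_[p]) :
    IsClosed {x : ℤ_[p] | (p : ℤ_[p]) ^ n ∣ x - c} := by
  simp only [pow_dvd_iff_norm_le]
  exact isClosed_le (continuous_norm.comp (continuous_sub_right c)) continuous_const

theorem isUnit_iff_not_dvd {x : ℤ_[p]} : IsUnit x ↔ ¬ (p : ℤ_[p]) ∣ x := by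
  rw [← norm_lt_one_iff_dvd, not_lt, isUnit_iff, le_antisymm_iff, and_iff_right (norm_le_one x)]

theorem range_subset_of_forall_natCast_mem {X : Type*} [TopologicalSpace X] {f : ℤ_[p] → X}
    (hf : Continuous f) {T : Set X} (hT : IsClosed T) (h : ∀ n : ℕ, f n ∈ T) :
    Set.range f ⊆ T := by
  rintro _ ⟨z, rfl⟩
  exact denseRange_natCast.induction_on (p := fun z => f z ∈ T) z (hT.preimage hf) h

theorem mem_range_of_forall_exists_pow_dvd_sub {f : ℤ_[p] → ℤ_[p]} (hf : Continuous f)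
    {x : ℤ_[p]} (h : ∀ k : ℕ, ∃ m : ℕ, (p : ℤ_[p]) ^ k ∣ f m - x) : x ∈ Set.range f := by
  rw [← (isCompact_range hf).isClosed.closure_eq, Metric.mem_closure_iff]
  intro ε hε
  have hp : (1 : ℝ) < p := mod_cast (Fact.out : p.Prime).one_lt
  obtain ⟨k, hk⟩ := exists_pow_lt_of_lt_one hε (inv_lt_one_of_one_lt₀ hp)
  obtain ⟨m, hm⟩ := h k
  refine ⟨f m, ⟨m, rfl⟩, ?_⟩
  rw [dist_comm, dist_eq_norm]
  calc ‖f m - x‖ ≤ (p : ℝ) ^ (-k : ℤ) := pow_dvd_iff_norm_le.1 hm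
    _ = (p : ℝ)⁻¹ ^ k := by rw [zpow_neg, zpow_natCast, inv_pow]
    _ < ε := hk

theorem two_dvd_sub_one_of_isUnit {x : ℤ_[2]} (hx : IsUnit x) : 2 ∣ x - 1 := by
  obtain ⟨n, hn, hxn⟩ := exists_mem_range x
  rw [maximalIdeal_eq_span_p, Ideal.mem_span_singleton] at hxn
  interval_cases n
  · exact absurd (by simpa using hxn) (isUnit_iff_not_dvd.1 hx)
  · simpa using hxn

theorem two_dvd_add_of_isUnit {x y : ℤ_[2]} (hx : IsUnit x) (hy : IsUnit y) : 2 ∣ x + y := by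
  have := ((two_dvd_sub_one_of_isUnit hx).add (two_dvd_sub_one_of_isUnit hy)).add (dvd_refl 2)
  convert this using 1
  ring

theorem isUnit_one_add_two_mul (t : ℤ_[2]) : IsUnit (1 + 2 * t) := by
  rw [isUnit_iff_not_dvd, dvd_add_left (by simp)]
  exact prime_p.not_dvd_one

theorem exists_isUnit_one_add_sq_eq_two_mul {r : ℤ_[2]} (hr : IsUnit r) :
    ∃ w, IsUnit w ∧ 1 + r ^ 2 = 2 * w := by
  obtain ⟨s, hs⟩ := two_dvd_sub_one_of_isUnit hr
  refine ⟨1 + 2 * (s + s ^ 2), isUnit_one_add_two_mul _, ?_⟩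
  rw [show r = 1 + 2 * s by linear_combination hs]
  ring

end PadicInt

namespace PadicInt

variable {q : ℤ_[2]} {l : ℕ}

theorem two_pow_succ_dvd_pow_two_mul_sub_one (hq : IsUnit q) (hl : 2 ^ l ∣ q + 1) (m : ℕ) :
    2 ^ (l + 1) ∣ q ^ (2 * m) - 1 := by
  have hsq : 2 ^ (l + 1) ∣ q ^ 2 - 1 := by
    rw [show q ^ 2 - 1 = (q + 1) * (q - 1) by ring, pow_succ]
    exact mul_dvd_mul hl (two_dvd_sub_one_of_isUnit hq)
  rw [pow_mul]
  exact hsq.trans (sub_one_dvd_pow_sub_one _ m)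

theorem two_pow_dvd_geom_sum_two_mul (hl : 2 ^ l ∣ q + 1) (m : ℕ) :
    2 ^ l ∣ ∑ i ∈ range (2 * m), q ^ i := by
  rw [geom_sum_range_two_mul, add_comm]
  exact hl.mul_right _

theorem two_pow_dvd_geom_sum_two_mul_add_one_sub_one (hq : IsUnit q) (hl : 2 ^ l ∣ q + 1)
    (m : ℕ) : 2 ^ l ∣ ∑ i ∈ range (2 * m + 1), q ^ i - 1 := by
  rw [sum_range_succ, add_sub_assoc]
  exact (two_pow_dvd_geom_sum_two_mul hl m).add
    ((pow_dvd_pow 2 l.le_succ).trans (two_pow_succ_dvd_pow_two_mul_sub_one hq hl m))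

theorem two_pow_dvd_geom_sum_or_sub_one (hq : IsUnit q) (hl : 2 ^ l ∣ q + 1) (n : ℕ) :
    2 ^ l ∣ ∑ i ∈ range n, q ^ i ∨ 2 ^ l ∣ ∑ i ∈ range n, q ^ i - 1 := by
  obtain ⟨m, rfl | rfl⟩ := n.even_or_odd'
  · exact .inl (two_pow_dvd_geom_sum_two_mul hl m)
  · exact .inr (two_pow_dvd_geom_sum_two_mul_add_one_sub_one hq hl m)

variable {u : ℤ_[2]}

theorem exists_isUnit_geom_sum_two_pow_succ (hq : IsUnit q) (hu : IsUnit u)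
    (hqu : q + 1 = 2 ^ l * u) (k : ℕ) :
    ∃ v, IsUnit v ∧ ∑ i ∈ range (2 ^ (k + 1)), q ^ i = 2 ^ (l + k) * v := by
  induction k with
  | zero => exact ⟨u, hu, by rw [zero_add, pow_one, geom_sum_two, hqu, add_zero]⟩
  | succ k ih =>
    obtain ⟨v, hv, hsum⟩ := ih
    obtain ⟨w, hw, hqw⟩ := exists_isUnit_one_add_sq_eq_two_mul (hq.pow (2 ^ k))
    refine ⟨w * v, hw.mul hv, ?_⟩
    rw [geom_sum_range_two_pow_succ, hsum, pow_succ 2 k, pow_mul, hqw]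
    ring

theorem exists_two_pow_dvd_geom_sum_sub (hq : IsUnit q) (hu : IsUnit u)
    (hqu : q + 1 = 2 ^ l * u) {y : ℤ_[2]} (hy : 2 ^ l ∣ y) (k : ℕ) :
    ∃ m, 2 ^ (l + k) ∣ ∑ i ∈ range m, q ^ i - y := by
  induction k with
  | zero => exact ⟨0, by simpa using hy⟩
  | succ k ih =>
    obtain ⟨m, b, hb⟩ := ih
    rw [← add_assoc, pow_succ]
    by_cases hb2 : (2 : ℤ_[2]) ∣ b
    · exact ⟨m, hb ▸ mul_dvd_mul_left _ hb2⟩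
    obtain ⟨v, hv, hsum⟩ := exists_isUnit_geom_sum_two_pow_succ hq hu hqu k
    have hb_unit : IsUnit b := isUnit_iff_not_dvd.2 (by simpa using hb2)
    refine ⟨m + 2 ^ (k + 1), ?_⟩
    rw [geom_sum_range_add, hsum, show ∑ i ∈ range m, q ^ i + q ^ m * (2 ^ (l + k) * v) - y
      = 2 ^ (l + k) * (b + q ^ m * v) by linear_combination hb]
    exact mul_dvd_mul_left _ (two_dvd_add_of_isUnit hb_unit ((hq.pow m).mul hv))

theorem exists_two_pow_dvd_geom_sum_sub_of_dvd_sub_one (hq : IsUnit q) (hu : IsUnit u)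
    (hqu : q + 1 = 2 ^ l * u) {x : ℤ_[2]} (hx : 2 ^ l ∣ x - 1) (k : ℕ) :
    ∃ m, 2 ^ (l + k) ∣ ∑ i ∈ range m, q ^ i - x := by
  obtain ⟨q', hqq'⟩ := hq.exists_right_inv
  obtain ⟨m, hm⟩ := exists_two_pow_dvd_geom_sum_sub hq hu hqu (hx.mul_left q') k
  refine ⟨m + 1, ?_⟩
  rw [geom_sum_succ, show q * ∑ i ∈ range m, q ^ i + 1 - x
    = q * (∑ i ∈ range m, q ^ i - q' * (x - 1)) by linear_combination (x - 1) * hqq']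
  exact hm.mul_left q

end PadicInt

open PadicInt

/-- For `q ∈ ℤ_2^×` with `q ≡ 3 (mod 4)`, `q ≠ −1`, and `l₀ = v_2(q+1)`,
the image of `ι_q : ℤ_2 → ℤ_2` is `2^{l₀}ℤ_2 ∪ (1 + 2^{l₀}ℤ_2)`. -/
theorem iota_range_two (q : ℤ_[2]) (hq : (4 : ℤ_[2]) ∣ q - 3) (hqm : q ≠ -1)
    (l₀ : ℕ) (hl₀ : (q + 1).valuation = (l₀ : ℤ))
    (ι : ℤ_[2] → ℤ_[2]) (hcont : Continuous ι)
    (hval : ∀ n : ℕ, ι n = ∑ i ∈ Finset.range n, q ^ i) :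
    Set.range ι =
      {x : ℤ_[2] | (2 : ℤ_[2]) ^ l₀ ∣ x} ∪ {x : ℤ_[2] | (2 : ℤ_[2]) ^ l₀ ∣ x - 1} := by
  have hq_unit : IsUnit q := by
    obtain ⟨t, ht⟩ := hq
    rw [show q = 1 + 2 * (1 + 2 * t) by linear_combination ht]
    exact isUnit_one_add_two_mul _
  have hq1 : q + 1 ≠ 0 := fun h => hqm (eq_neg_of_add_eq_zero_left h)
  have hqu : q + 1 = 2 ^ l₀ * (unitCoeff hq1 : ℤ_[2]) := by
    rw [mul_comm, ← Nat.cast_inj.1 hl₀]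
    simpa using unitCoeff_spec hq1
  have hclosed : IsClosed ({x : ℤ_[2] | (2 : ℤ_[2]) ^ l₀ ∣ x}
      ∪ {x : ℤ_[2] | (2 : ℤ_[2]) ^ l₀ ∣ x - 1}) := by
    simpa using (isClosed_setOf_pow_dvd_sub (p := 2) l₀ 0).union (isClosed_setOf_pow_dvd_sub l₀ 1)
  refine subset_antisymm (range_subset_of_forall_natCast_mem hcont hclosed fun n => ?_) ?_
  · rw [hval]
    exact two_pow_dvd_geom_sum_or_sub_one hq_unit (Dvd.intro _ hqu.symm) n
  · refine fun x hx => mem_range_of_forall_exists_pow_dvd_sub hcont fun k => ?_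
    obtain ⟨m, hm⟩ := hx.elim
      (exists_two_pow_dvd_geom_sum_sub hq_unit (Units.isUnit _) hqu · k)
      (exists_two_pow_dvd_geom_sum_sub_of_dvd_sub_one hq_unit (Units.isUnit _) hqu · k)
    exact ⟨m, by simpa [hval] using (pow_dvd_pow 2 (k.le_add_left l₀)).trans hm⟩
end

section
/- Let p = 2, q ∈ 1 + 2ℤ_2 with q ≡ 3 (mod 4) and q ≠ −1, set l_0 = v_2(q+1). For z ∈ 2ℤ_2 with z ≠ 0, v_2(ι_q(z)) = v_2(z) + l_0 − 1. -/
/-!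
Multiplying by `q - 1` turns `ι_q(2n)` into `(q²)ⁿ - 1`. Since `q ≡ 3 (mod 4)`, we have
`‖q - 1‖ = ‖2‖` and `q² ≡ 1 (mod 8)`, so lifting the exponent at `2` gives
`‖ι_q(2n)‖ = ‖q + 1‖ ‖n‖` for `n ∈ ℕ`. Both sides are continuous in `n` and `ℕ` is dense in `ℤ_2`,
so `‖ι_q(2w)‖ = ‖q + 1‖ ‖w‖` for every `w ∈ ℤ_2`; taking valuations at `z = 2w` gives the claim.
-/

open Finset

namespace PadicInt

section

variable {p : ℕ} [Fact p.Prime]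

lemma norm_add_eq_left_of_lt {x y : ℤ_[p]} (h : ‖y‖ < ‖x‖) : ‖x + y‖ = ‖x‖ := by
  rw [norm_add_eq_max_of_ne h.ne', max_eq_left h.le]

lemma norm_le_of_dvd {x y : ℤ_[p]} (h : x ∣ y) : ‖y‖ ≤ ‖x‖ := by
  obtain ⟨c, rfl⟩ := h
  rw [norm_mul]
  exact mul_le_of_le_one_right (norm_nonneg x) (norm_le_one c)

lemma valuation_eq_of_norm_eq {x y : ℤ_[p]} (hx : x ≠ 0) (hy : y ≠ 0) (h : ‖x‖ = ‖y‖) :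
    x.valuation = y.valuation := by
  rw [norm_eq_zpow_neg_valuation hx, norm_eq_zpow_neg_valuation hy] at h
  have hp : (1 : ℝ) < p := mod_cast (Fact.out : p.Prime).one_lt
  exact_mod_cast neg_injective (zpow_right_injective₀ (by positivity) hp.ne' h)

lemma norm_geom_sum_sub_natCast_le (u : ℤ_[p]) (m : ℕ) :
    ‖∑ i ∈ range m, u ^ i - m‖ ≤ ‖u - 1‖ := by
  have h : ∑ i ∈ range m, u ^ i - m = ∑ i ∈ range m, (u ^ i - 1) := by simp
  rw [h]
  exact IsUltrametricDist.norm_sum_le_of_forall_le_of_nonneg (norm_nonneg _)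
    fun i _ ↦ norm_le_of_dvd (sub_one_dvd_pow_sub_one u i)

lemma norm_pow_sub_one_of_coprime {u : ℤ_[p]} (hu : ‖u - 1‖ < 1) {m : ℕ} (hm : p.Coprime m) :
    ‖u ^ m - 1‖ = ‖u - 1‖ := by
  have hm_norm : ‖(m : ℤ_[p])‖ = 1 := norm_natCast_eq_one_iff.mpr hm
  have hsum : ‖∑ i ∈ range m, u ^ i‖ = 1 := by
    have := norm_add_eq_left_of_lt ((norm_geom_sum_sub_natCast_le u m).trans_lt (hm_norm ▸ hu))
    rwa [add_sub_cancel, hm_norm] at this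
  rw [← geom_sum_mul, norm_mul, hsum, one_mul]

lemma norm_sq_sub_one {u : ℤ_[p]} (hu : ‖u - 1‖ < ‖(2 : ℤ_[p])‖) :
    ‖u ^ 2 - 1‖ = ‖u - 1‖ * ‖(2 : ℤ_[p])‖ := by
  have h : ‖u + 1‖ = ‖(2 : ℤ_[p])‖ := by
    rw [show u + 1 = 2 + (u - 1) by ring, norm_add_eq_left_of_lt hu]
  rw [show u ^ 2 - 1 = (u - 1) * (u + 1) by ring, norm_mul, h]

end

lemma norm_two : ‖(2 : ℤ_[2])‖ = 2⁻¹ := by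
  simpa using norm_p (p := 2)

lemma valuation_two : (2 : ℤ_[2]).valuation = 1 := by
  exact_mod_cast valuation_p (p := 2)

lemma norm_pow_sub_one_of_norm_sub_one_lt_norm_two {u : ℤ_[2]}
    (hu : ‖u - 1‖ < ‖(2 : ℤ_[2])‖) (n : ℕ) : ‖u ^ n - 1‖ = ‖u - 1‖ * ‖(n : ℤ_[2])‖ := by
  induction n using Nat.evenOddRec generalizing u with
  | h0 => simp
  | h_even n ih =>
    have hu_sq := norm_sq_sub_one hu
    have hu_sq_lt : ‖u ^ 2 - 1‖ < ‖(2 : ℤ_[2])‖ :=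
      hu_sq ▸ (mul_le_of_le_one_right (norm_nonneg _) (norm_le_one 2)).trans_lt hu
    rw [pow_mul, ih hu_sq_lt, hu_sq, Nat.cast_mul, Nat.cast_ofNat, norm_mul, mul_assoc]
  | h_odd n _ =>
    have hodd : ‖((2 * n + 1 : ℕ) : ℤ_[2])‖ = 1 := norm_natCast_eq_one_iff.mpr (by simp)
    rw [hodd, mul_one]
    exact norm_pow_sub_one_of_coprime (hu.trans_le (norm_le_one 2)) (by simp)

lemma norm_geom_sum_two_mul {q : ℤ_[2]} (hq : ‖q - 1‖ = ‖(2 : ℤ_[2])‖) (n : ℕ) :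
    ‖∑ i ∈ range (2 * n), q ^ i‖ = ‖q + 1‖ * ‖(n : ℤ_[2])‖ := by
  have hq_add : ‖q + 1‖ < 1 := by
    have := nonarchimedean (q - 1) 2
    rw [show q - 1 + 2 = q + 1 by ring, hq, max_self, norm_two] at this
    exact this.trans_lt (by norm_num)
  have hq_sq : ‖q ^ 2 - 1‖ = ‖q - 1‖ * ‖q + 1‖ := by
    rw [← norm_mul]
    ring_nf
  have hq_sq_lt : ‖q ^ 2 - 1‖ < ‖(2 : ℤ_[2])‖ := by
    rw [hq_sq, hq]
    exact mul_lt_of_lt_one_right (by simp [norm_two]) hq_add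
  have hq_sub : ‖q - 1‖ ≠ 0 := by simp [hq, norm_two]
  apply mul_right_cancel₀ hq_sub
  rw [← norm_mul, geom_sum_mul, pow_mul, norm_pow_sub_one_of_norm_sub_one_lt_norm_two hq_sq_lt,
    hq_sq]
  ring

lemma norm_apply_two_mul {q : ℤ_[2]} (hq : ‖q - 1‖ = ‖(2 : ℤ_[2])‖)
    {ι : ℤ_[2] → ℤ_[2]} (hcont : Continuous ι) (hval : ∀ n : ℕ, ι n = ∑ i ∈ range n, q ^ i)
    (w : ℤ_[2]) : ‖ι (2 * w)‖ = ‖q + 1‖ * ‖w‖ := by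
  refine congr_fun (denseRange_natCast.equalizer (g := fun w ↦ ‖ι (2 * w)‖)
    (h := fun w ↦ ‖q + 1‖ * ‖w‖) (by fun_prop) (by fun_prop) (funext fun n ↦ ?_)) w
  have h2n : (2 * n : ℤ_[2]) = ((2 * n : ℕ) : ℤ_[2]) := by push_cast; rfl
  simp only [Function.comp_apply, h2n, hval]
  exact norm_geom_sum_two_mul hq n

end PadicInt

open PadicInt

/-- For `q ∈ ℤ_2` with `q ≡ 3 (mod 4)`, `q ≠ −1`, `l₀ = v_2(q+1)`, and
`z ∈ 2ℤ_2`, `z ≠ 0`: `v_2(ι_q(z)) = v_2(z) + l₀ − 1`. -/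
theorem iota_valuation_two (q : ℤ_[2]) (hq : (4 : ℤ_[2]) ∣ q - 3) (hqm : q ≠ -1)
    (l₀ : ℕ) (hl₀ : (q + 1).valuation = (l₀ : ℤ))
    (ι : ℤ_[2] → ℤ_[2]) (hcont : Continuous ι)
    (hval : ∀ n : ℕ, ι n = ∑ i ∈ Finset.range n, q ^ i)
    (z : ℤ_[2]) (hz2 : (2 : ℤ_[2]) ∣ z) (hz0 : z ≠ 0) :
    (ι z).valuation = z.valuation + (l₀ : ℤ) - 1 := by
  have hq_sub : ‖q - 1‖ = ‖(2 : ℤ_[2])‖ := by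
    have h4 : ‖q - 3‖ < ‖(2 : ℤ_[2])‖ := by
      refine (norm_le_of_dvd hq).trans_lt ?_
      rw [show (4 : ℤ_[2]) = 2 * 2 by norm_num, norm_mul, norm_two]
      norm_num
    rw [show q - 1 = 2 + (q - 3) by ring, norm_add_eq_left_of_lt h4]
  obtain ⟨w, rfl⟩ := hz2
  have hw : w ≠ 0 := right_ne_zero_of_mul hz0
  have hq_add : q + 1 ≠ 0 := fun h ↦ hqm (eq_neg_of_add_eq_zero_left h)
  have hnorm : ‖ι (2 * w)‖ = ‖(q + 1) * w‖ := by
    rw [norm_mul, norm_apply_two_mul hq_sub hcont hval]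
  have hι : ι (2 * w) ≠ 0 := by
    rw [← norm_ne_zero_iff, hnorm, norm_ne_zero_iff]
    exact mul_ne_zero hq_add hw
  rw [valuation_eq_of_norm_eq hι (mul_ne_zero hq_add hw) hnorm, valuation_mul hq_add hw,
    valuation_mul two_ne_zero hw, valuation_two]
  push_cast
  omega
end

section
/- Let q ∈ 3 + 4ℤ_2, q ≠ −1, and n ≥ 1. Then ∑_{z=0}^{2^n − 1} ι_q(z) ≡ 2^{n−1} (mod 2^n). -/
/-!
Writing `S(N) = ∑_{z<N} ι_q(z)`, the doubling identity
`S(2N) = (1 + q^N) S(N) + N ι_q(N)` gives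
`S(2N) - N = 2 (S(N) - N/2) + (q^N - 1) S(N) + N ι_q(N)` for `N = 2^n`, `n ≥ 1`.
Each term is divisible by `2N`: the first by induction, the second because
`2^(n+1) ∣ q^(2^n) - 1` as `q` is odd, the third because `ι_q(N)` is a sum of an even number of
odd terms.
-/

open Finset

section

variable {R : Type*} [CommRing R]

theorem dvd_geom_sum_iff_of_dvd_sub_one {p q : R} (h : p ∣ q - 1) (N : ℕ) :
    p ∣ ∑ i ∈ range N, q ^ i ↔ p ∣ (N : R) := by
  simpa using dvd_geom_sum₂_iff_of_dvd_sub (n := N) (y := 1) h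

theorem sum_range_add_self_geom_sum (q : R) (N : ℕ) :
    ∑ z ∈ range (N + N), ∑ i ∈ range z, q ^ i =
      (1 + q ^ N) * ∑ z ∈ range N, ∑ i ∈ range z, q ^ i + N * ∑ i ∈ range N, q ^ i := by
  have shift (z : ℕ) : ∑ i ∈ range (N + z), q ^ i =
      ∑ i ∈ range N, q ^ i + q ^ N * ∑ i ∈ range z, q ^ i := by
    simp only [sum_range_add, mul_sum, pow_add]
  simp only [sum_range_add (fun z => ∑ i ∈ range z, q ^ i), shift, sum_add_distrib, sum_const,
    card_range, nsmul_eq_mul, ← mul_sum]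
  ring

theorem two_pow_succ_dvd_sum_geom_sum_sub {q : R} (hq : 2 ∣ q - 1) (n : ℕ) :
    (2 : R) ^ (n + 1) ∣ (∑ z ∈ range (2 ^ (n + 1)), ∑ i ∈ range z, q ^ i) - 2 ^ n := by
  induction n with
  | zero => simp [sum_range_succ]
  | succ n ih =>
    set N := 2 ^ (n + 1)
    have hpow : (2 : R) ^ (n + 2) ∣ q ^ N - 1 := by
      simpa using dvd_sub_pow_of_dvd_sub (R := R) (p := 2) (a := q) (b := 1) (by exact_mod_cast hq)
        (n + 1)
    have hiota : (2 : R) ∣ ∑ i ∈ range N, q ^ i :=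
      (dvd_geom_sum_iff_of_dvd_sub_one hq N).2 ⟨2 ^ n, by simp [N, pow_succ']⟩
    have hsplit : (∑ z ∈ range (2 ^ (n + 2)), ∑ i ∈ range z, q ^ i) - 2 ^ (n + 1) =
        2 * ((∑ z ∈ range N, ∑ i ∈ range z, q ^ i) - 2 ^ n) +
          (q ^ N - 1) * ∑ z ∈ range N, ∑ i ∈ range z, q ^ i +
          (N : R) * ∑ i ∈ range N, q ^ i := by
      rw [show 2 ^ (n + 2) = N + N by simp only [N]; ring, sum_range_add_self_geom_sum]
      simp only [N]
      push_cast
      ring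
    rw [hsplit]
    refine dvd_add (dvd_add ?_ (hpow.mul_right _)) ?_
    · simpa [pow_succ'] using mul_dvd_mul_left (2 : R) ih
    · simpa [N, pow_succ] using mul_dvd_mul_left ((2 : R) ^ (n + 1)) hiota

end

theorem iota_sum_mod_three_general (q : ℤ_[2]) (hq : (4 : ℤ_[2]) ∣ q - 3)
    (n : ℕ) :
    (2 : ℤ_[2]) ^ n ∣
      (∑ z ∈ Finset.range (2 ^ n), ∑ i ∈ Finset.range z, q ^ i) - 2 ^ (n - 1) := by
  have hq_odd : (2 : ℤ_[2]) ∣ q - 1 := by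
    obtain ⟨a, ha⟩ := hq
    exact ⟨2 * a + 1, by linear_combination ha⟩
  cases n with
  | zero => simp
  | succ n => simpa using two_pow_succ_dvd_sum_geom_sum_sub hq_odd n

/-- For `q ∈ 3 + 4ℤ_2`, `q ≠ −1`, and `n ≥ 1`:
`∑_{z=0}^{2^n−1} ι_q(z) ≡ 2^{n−1} (mod 2^n)`, where `ι_q(z) = 1 + q + ⋯ + q^{z−1}`. -/
theorem iota_sum_mod_three (q : ℤ_[2]) (hq : (4 : ℤ_[2]) ∣ q - 3) (hqm : q ≠ -1)
    (n : ℕ) (hn : 1 ≤ n) :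
    (2 : ℤ_[2]) ^ n ∣
      (∑ z ∈ Finset.range (2 ^ n), ∑ i ∈ Finset.range z, q ^ i) - 2 ^ (n - 1) :=
  iota_sum_mod_three_general q hq n
end

section
/- Let p be a prime, q ∈ 1 + pℤ_p, n ≥ 1, and z ∈ ℤ_p. If v_p(z(z−1)) ≥ n − v_p(q − 1) + v_p(2), then ι_q(z) ≡ z (mod p^n). -/
/-!
Write `q = 1 + d` with `v_p(d) ≥ max(m₀, 1)`. For a natural number `k`,
`ι_q(k) - k = ∑_{j ≥ 0} C(k, j + 2) d^(j + 1)`, and `k(k - 1)` divides `(j + 2)! C(k, j + 2)`.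
Legendre's bound `v_p((j + 2)!) ≤ j + v_p(2)` then makes every term divisible by `p^n`.
Since `ℕ` is dense in `ℤ_p` and `ι_q` is continuous, a general `z` can be replaced by a natural
number `k` with `k ≡ z` and `ι_q(k) ≡ ι_q(z)` to any prescribed precision.
-/

open Finset
open scoped Nat

theorem geom_sum_add_one_eq_sum_choose_mul_pow {R : Type*} [CommRing R] (d : R) (k : ℕ) :
    ∑ i ∈ range k, (d + 1) ^ i = ∑ j ∈ range k, (k.choose (j + 1) : R) * d ^ j := by
  simpa [Polynomial.eval_finsetSum] using
    congrArg (Polynomial.eval d) (Polynomial.geom_sum_X_comp_X_add_one_eq_sum (R := R) k)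

section Valuation

variable {p : ℕ} [hp : Fact p.Prime]

theorem padicValNat_factorial_add_two_le (j : ℕ) :
    padicValNat p (j + 2)! ≤ j + if p = 2 then 1 else 0 := by
  have hlt := sub_one_mul_padicValNat_factorial_lt_of_ne_zero p (n := j + 2) (by omega)
  split_ifs with hp2
  · subst hp2
    omega
  · have h3 : 3 ≤ p := (hp.out.two_le.lt_of_ne' hp2).nat_succ_le
    have : 2 * padicValNat p (j + 2)! ≤ (p - 1) * padicValNat p (j + 2)! :=
      Nat.mul_le_mul_right _ (by omega)
    omega

theorem pow_dvd_choose_add_two {k A : ℕ} (hk : p ^ A ∣ k.descFactorial 2) (j : ℕ) :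
    p ^ (A - (j + if p = 2 then 1 else 0)) ∣ k.choose (j + 2) := by
  rcases lt_or_ge k (j + 2) with hkj | hkj
  · simp [Nat.choose_eq_zero_of_lt hkj]
  have hC : k.choose (j + 2) ≠ 0 := (Nat.choose_pos hkj).ne'
  have hdvd : p ^ A ∣ (j + 2)! * k.choose (j + 2) := by
    rw [← Nat.descFactorial_eq_factorial_mul_choose]
    exact hk.trans (Dvd.intro_left _ (Nat.descFactorial_mul_descFactorial (by omega)))
  rw [padicValNat_dvd_iff_le (mul_ne_zero (Nat.factorial_ne_zero _) hC),
    padicValNat.mul (Nat.factorial_ne_zero _) hC] at hdvd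
  rw [padicValNat_dvd_iff_le hC]
  have := padicValNat_factorial_add_two_le (p := p) j
  omega

theorem pow_dvd_geom_sum_add_one_sub_natCast {R : Type*} [CommRing R] {d : R}
    (hd : (p : R) ∣ d) {m n k : ℕ} (hm : (p : R) ^ m ∣ d)
    (hk : p ^ (n - m + if p = 2 then 1 else 0) ∣ k.descFactorial 2) :
    (p : R) ^ n ∣ ∑ i ∈ range k, (d + 1) ^ i - k := by
  rw [geom_sum_add_one_eq_sum_choose_mul_pow]
  cases k with
  | zero => simp
  | succ k =>
    rw [sum_range_succ', Nat.choose_one_right, pow_zero, mul_one, add_sub_cancel_right]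
    refine dvd_sum fun j _ => ?_
    have hC : (p : R) ^ (n - m + (if p = 2 then 1 else 0) - (j + if p = 2 then 1 else 0)) ∣
        ((k + 1).choose (j + 1 + 1) : R) := by
      exact_mod_cast Nat.cast_dvd_cast (pow_dvd_choose_add_two hk j)
    have hdj : (p : R) ^ (m + j) ∣ d ^ (j + 1) := by
      rw [pow_succ', pow_add]
      exact mul_dvd_mul hm (pow_dvd_pow_of_dvd hd j)
    have hterm := mul_dvd_mul hC hdj
    rw [← pow_add] at hterm
    exact (pow_dvd_pow _ (by omega)).trans hterm

end Valuation

namespace PadicInt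

variable {p : ℕ} [Fact p.Prime]

theorem pow_dvd_sub_iff_dist_le (x y : ℤ_[p]) (n : ℕ) :
    (p : ℤ_[p]) ^ n ∣ x - y ↔ dist x y ≤ (p : ℝ) ^ (-n : ℤ) := by
  rw [dist_eq_norm, norm_le_pow_iff_mem_span_pow, Ideal.mem_span_singleton]

theorem pow_dvd_natCast_iff (n k : ℕ) : (p : ℤ_[p]) ^ n ∣ k ↔ p ^ n ∣ k := by
  exact_mod_cast pow_p_dvd_int_iff n k

theorem exists_natCast_pow_dvd_sub_of_continuousAt {f : ℤ_[p] → ℤ_[p]} {z : ℤ_[p]}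
    (hf : ContinuousAt f z) (N n : ℕ) :
    ∃ k : ℕ, (p : ℤ_[p]) ^ N ∣ z - k ∧ (p : ℤ_[p]) ^ n ∣ f z - f k := by
  have hpos (m : ℕ) : 0 < (p : ℝ) ^ (-m : ℤ) :=
    zpow_pos (by exact_mod_cast (Fact.out : p.Prime).pos) _
  have hnhds : Metric.ball z _ ∩ f ⁻¹' Metric.ball (f z) _ ∈ nhds z :=
    Filter.inter_mem (Metric.ball_mem_nhds z (hpos N)) (hf (Metric.ball_mem_nhds (f z) (hpos n)))
  obtain ⟨_, ⟨hkz, hfk⟩, k, rfl⟩ := mem_closure_iff_nhds.mp (denseRange_natCast z) _ hnhds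
  rw [Set.mem_preimage, Metric.mem_ball, dist_comm] at hfk
  rw [Metric.mem_ball, dist_comm] at hkz
  exact ⟨k, (pow_dvd_sub_iff_dist_le _ _ _).mpr hkz.le,
    (pow_dvd_sub_iff_dist_le _ _ _).mpr hfk.le⟩

end PadicInt

theorem modular_fixed_point_pairs_general (p : ℕ) [Fact p.Prime]
    (q : ℤ_[p]) (hq : (p : ℤ_[p]) ∣ q - 1)
    (ι : ℤ_[p] → ℤ_[p]) (hcont : Continuous ι)
    (hval : ∀ k : ℕ, ι k = ∑ i ∈ Finset.range k, q ^ i)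
    (n : ℕ) (m₀ : ℕ) (hm₀ : (p : ℤ_[p]) ^ m₀ ∣ q - 1)
    (z : ℤ_[p])
    (hz : (p : ℤ_[p]) ^ (n - m₀ + if p = 2 then 1 else 0) ∣ z * (z - 1)) :
    (p : ℤ_[p]) ^ n ∣ ι z - z := by
  set A := n - m₀ + if p = 2 then 1 else 0
  obtain ⟨k, hzk, hιk⟩ :=
    PadicInt.exists_natCast_pow_dvd_sub_of_continuousAt hcont.continuousAt (max n A) n
  have hkA : p ^ A ∣ k.descFactorial 2 := by
    rw [← PadicInt.pow_dvd_natCast_iff, Nat.cast_descFactorial_two]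
    refine (dvd_sub_right hz).mp ?_
    rw [show z * (z - 1) - k * (k - 1) = (z - k) * (z + k - 1) by ring]
    exact ((pow_dvd_pow _ (le_max_right n A)).trans hzk).mul_right _
  have hk : (p : ℤ_[p]) ^ n ∣ ι k - k := by
    rw [hval, ← sub_add_cancel q 1]
    exact pow_dvd_geom_sum_add_one_sub_natCast hq hm₀ hkA
  rw [show ι z - z = (ι z - ι k) + (ι k - k) - (z - k) by ring]
  exact dvd_sub (dvd_add hιk hk) ((pow_dvd_pow _ (le_max_left n A)).trans hzk)

/-- Modular fixed point pairs: for `q ∈ 1 + pℤ_p`, `n ≥ 1`, if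
`v_p(z(z−1)) ≥ n − v_p(q−1) + v_p(2)` then `ι_q(z) ≡ z (mod p^n)`.
(The valuation condition is expressed via divisibility, with `m₀ ≤ v_p(q−1)`.) -/
theorem modular_fixed_point_pairs (p : ℕ) [Fact p.Prime]
    (q : ℤ_[p]) (hq : (p : ℤ_[p]) ∣ q - 1)
    (ι : ℤ_[p] → ℤ_[p]) (hcont : Continuous ι)
    (hval : ∀ k : ℕ, ι k = ∑ i ∈ Finset.range k, q ^ i)
    (n : ℕ) (hn : 1 ≤ n) (m₀ : ℕ) (hm₀ : (p : ℤ_[p]) ^ m₀ ∣ q - 1)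
    (z : ℤ_[p])
    (hz : (p : ℤ_[p]) ^ (n - m₀ + if p = 2 then 1 else 0) ∣ z * (z - 1)) :
    (p : ℤ_[p]) ^ n ∣ ι z - z :=
  modular_fixed_point_pairs_general p q hq ι hcont hval n m₀ hm₀ z hz
end

section
/- Let p be a prime with p ≠ 3, and q ∈ 1 + pℤ_p, q ≠ 1. If z ∈ ℤ_p satisfies ι_q(z) = z, then z = 0 or z = 1. -/
/-!
Put `t = q - 1`, so `‖t‖ ≤ p⁻¹`. For `n : ℕ`,
`t * ι n = (1 + t) ^ n - 1 = n t + C(n,2) t² + ∑_{k ≥ 3} C(n,k) tᵏ`, and when `p ≠ 3` every term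
with `k ≥ 3` is smaller than `C(n,2) t²` by a factor `p`: this rests on
`C(n,k) C(k,2) = C(n,2) C(n-2,k-2)` and `v_p (C(k,2)) ≤ k - 3`, which fails only for `p = 3`, `k = 3`.
Hence `‖2‖ ‖ι n - n‖ = ‖t‖ ‖n (n - 1)‖` for all `n : ℕ`. Both sides are continuous, so the identity
extends to all of `ℤ_[p]` by density of `ℕ`, and at a fixed point `z` it forces `z (z - 1) = 0`.
-/

open Finset

theorem Nat.Prime.pow_le_of_pow_dvd_add_one_mul {p m a : ℕ} (hp : p.Prime) (ha : 0 < a)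
    (h : p ^ m ∣ (a + 1) * a) : p ^ m ≤ a + 1 := by
  by_cases hdvd : p ∣ a
  · have hsucc : ¬ p ∣ a + 1 := fun h' => hp.not_dvd_one ((Nat.dvd_add_right hdvd).1 h')
    exact (Nat.le_of_dvd ha (hp.prime.pow_dvd_of_dvd_mul_left m hsucc h)).trans a.le_succ
  · exact Nat.le_of_dvd a.succ_pos (hp.prime.pow_dvd_of_dvd_mul_right m hdvd h)

theorem Nat.not_pow_succ_dvd_choose_two {p : ℕ} (hp : p.Prime) (hp3 : p ≠ 3) (j : ℕ) :
    ¬ p ^ (j + 1) ∣ (j + 3).choose 2 := by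
  intro h
  have hchoose : (j + 3).choose 2 * 2 = (j + 2 + 1) * (j + 2) := by
    simpa using (Nat.add_one_mul_choose_eq (j + 2) 1).symm
  have hj : j < p ^ j := Nat.lt_pow_self hp.one_lt
  rcases eq_or_ne p 2 with rfl | hp2
  · have := hp.pow_le_of_pow_dvd_add_one_mul (m := j + 2) (by omega)
      (hchoose ▸ pow_succ 2 (j + 1) ▸ Nat.mul_dvd_mul_right h 2)
    rw [pow_succ, pow_succ] at this
    omega
  · have hp5 := hp.five_le_of_ne_two_of_ne_three hp2 hp3
    have := hp.pow_le_of_pow_dvd_add_one_mul (by omega)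
      (hchoose ▸ h.trans (Nat.dvd_mul_right _ 2))
    rw [pow_succ] at this
    nlinarith

theorem Nat.two_mul_cast_choose_two {R : Type*} [CommRing R] (n : ℕ) :
    2 * (n.choose 2 : R) = n * (n - 1) := by
  cases n with
  | zero => simp
  | succ m =>
    have h := congrArg (Nat.cast : ℕ → R) (Nat.add_one_mul_choose_eq m 1)
    push_cast at h
    rw [Nat.choose_one_right] at h
    push_cast
    linear_combination -h

theorem one_add_pow_eq_quadratic_add_sum {R : Type*} [CommSemiring R] (t : R) (n : ℕ) :
    (1 + t) ^ n = 1 + n * t + n.choose 2 * t ^ 2 +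
      ∑ j ∈ range n, (n.choose (j + 3) : R) * t ^ (j + 3) := by
  have hsum : (1 + t) ^ n = ∑ m ∈ range (n + 3), (n.choose m : R) * t ^ m := by
    rw [add_comm, add_pow]
    refine (Finset.sum_subset (range_subset_range.2 (by omega : n + 1 ≤ n + 3))
      fun m _ hm => ?_).trans ?_
    · simp [Nat.choose_eq_zero_of_lt (by simpa using hm : n < m)]
    · exact sum_congr rfl fun m _ => by rw [one_pow, mul_one, mul_comm]
  rw [hsum, sum_range_succ', sum_range_succ', sum_range_succ']
  simp only [zero_add, Nat.reduceAdd, Nat.choose_one_right, pow_one, Nat.choose_zero_right,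
    Nat.cast_one, pow_zero, mul_one]
  ring

theorem IsUltrametricDist.norm_add_eq_left_of_norm_le_mul {E : Type*} [SeminormedAddCommGroup E]
    [IsUltrametricDist E] {a b : E} {c : ℝ} (hc : c < 1) (h : ‖b‖ ≤ c * ‖a‖) :
    ‖a + b‖ = ‖a‖ := by
  have hba : ‖b‖ ≤ ‖a‖ := h.trans (mul_le_of_le_one_left (norm_nonneg a) hc.le)
  by_cases hne : ‖a‖ = ‖b‖
  · have ha : ‖a‖ = 0 := by nlinarith [norm_nonneg a]
    have := norm_add_le a b
    linarith [norm_nonneg (a + b)]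
  · rw [norm_add_eq_max_of_norm_ne_norm hne, max_eq_left hba]

namespace PadicInt

variable {p : ℕ} [Fact p.Prime]

theorem inv_pow_le_norm_choose_two (hp3 : p ≠ 3) (j : ℕ) :
    (p : ℝ)⁻¹ ^ j ≤ ‖((j + 3).choose 2 : ℤ_[p])‖ := by
  by_contra! hlt
  have hle : ‖((((j + 3).choose 2 : ℕ) : ℤ) : ℤ_[p])‖ ≤ (p : ℝ) ^ (-(j + 1 : ℕ) : ℤ) := by
    rw [norm_le_pow_iff_norm_lt_pow_add_one]
    push_cast
    simpa [zpow_neg, zpow_natCast, inv_pow] using hlt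
  exact Nat.not_pow_succ_dvd_choose_two Fact.out hp3 j
    (by exact_mod_cast norm_int_le_pow_iff_dvd.1 hle)

theorem norm_choose_mul_norm_choose_le (n : ℕ) {k s : ℕ} (hsk : s ≤ k) :
    ‖(n.choose k : ℤ_[p])‖ * ‖(k.choose s : ℤ_[p])‖ ≤ ‖(n.choose s : ℤ_[p])‖ := by
  rw [← norm_mul, ← Nat.cast_mul, Nat.choose_mul hsk, Nat.cast_mul, norm_mul]
  exact mul_le_of_le_one_right (norm_nonneg _) (norm_le_one _)

theorem norm_choose_mul_pow_le (hp3 : p ≠ 3) {t : ℤ_[p]} (ht : ‖t‖ ≤ (p : ℝ)⁻¹) (n j : ℕ) :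
    ‖(n.choose (j + 3) : ℤ_[p]) * t ^ (j + 3)‖ ≤ (p : ℝ)⁻¹ * ‖(n.choose 2 : ℤ_[p]) * t ^ 2‖ := by
  have htj : ‖t‖ ^ (j + 1) ≤ (p : ℝ)⁻¹ * ‖((j + 3).choose 2 : ℤ_[p])‖ :=
    calc ‖t‖ ^ (j + 1) ≤ (p : ℝ)⁻¹ ^ (j + 1) := pow_le_pow_left₀ (norm_nonneg t) ht _
      _ ≤ (p : ℝ)⁻¹ * ‖((j + 3).choose 2 : ℤ_[p])‖ := by
        rw [pow_succ']; gcongr; exact inv_pow_le_norm_choose_two hp3 j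
  calc ‖(n.choose (j + 3) : ℤ_[p]) * t ^ (j + 3)‖
      = ‖(n.choose (j + 3) : ℤ_[p])‖ * ‖t‖ ^ (j + 1) * ‖t‖ ^ 2 := by
        rw [norm_mul, norm_pow]; ring
    _ ≤ ‖(n.choose (j + 3) : ℤ_[p])‖ * ((p : ℝ)⁻¹ * ‖((j + 3).choose 2 : ℤ_[p])‖) * ‖t‖ ^ 2 := by
        gcongr
    _ = (p : ℝ)⁻¹ * (‖(n.choose (j + 3) : ℤ_[p])‖ * ‖((j + 3).choose 2 : ℤ_[p])‖) * ‖t‖ ^ 2 := by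
        ring
    _ ≤ (p : ℝ)⁻¹ * ‖(n.choose 2 : ℤ_[p])‖ * ‖t‖ ^ 2 := by
        gcongr; exact norm_choose_mul_norm_choose_le n (by omega)
    _ = (p : ℝ)⁻¹ * ‖(n.choose 2 : ℤ_[p]) * t ^ 2‖ := by
        rw [norm_mul, norm_pow, mul_assoc]

theorem norm_one_add_pow_sub_one_sub_mul (hp3 : p ≠ 3) {t : ℤ_[p]} (ht : ‖t‖ ≤ (p : ℝ)⁻¹)
    (n : ℕ) : ‖(1 + t) ^ n - 1 - n * t‖ = ‖(n.choose 2 : ℤ_[p]) * t ^ 2‖ := by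
  rw [one_add_pow_eq_quadratic_add_sum,
    show ∀ a b c : ℤ_[p], 1 + a + b + c - 1 - a = b + c by intros; ring]
  refine IsUltrametricDist.norm_add_eq_left_of_norm_le_mul
    (inv_lt_one_of_one_lt₀ (Nat.one_lt_cast.2 (Fact.out : p.Prime).one_lt)) ?_
  exact IsUltrametricDist.norm_sum_le_of_forall_le_of_nonneg (by positivity)
    fun j _ => norm_choose_mul_pow_le hp3 ht n j

theorem norm_two_mul_norm_geom_sum_sub_natCast (hp3 : p ≠ 3) {q : ℤ_[p]}
    (hq : ‖q - 1‖ ≤ (p : ℝ)⁻¹) (n : ℕ) :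
    ‖(2 : ℤ_[p])‖ * ‖∑ i ∈ range n, q ^ i - n‖ = ‖q - 1‖ * ‖(n : ℤ_[p]) * (n - 1)‖ := by
  have h := norm_one_add_pow_sub_one_sub_mul hp3 hq n
  rcases eq_or_ne q 1 with rfl | hq1
  · simp
  rw [add_sub_cancel, ← geom_sum_mul, ← sub_mul, norm_mul, norm_mul, norm_pow, sq, ← mul_assoc,
    mul_left_inj' (norm_ne_zero_iff.2 (sub_ne_zero.2 hq1))] at h
  rw [h, ← Nat.two_mul_cast_choose_two, norm_mul]
  ring

end PadicInt

/-- For `p ≠ 3` and `q ∈ 1 + pℤ_p`, `q ≠ 1`: the only p-adic fixed points of `ι_q`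
are `0` and `1`. -/
theorem no_nontrivial_fixed_points (p : ℕ) [Fact p.Prime] (hp3 : p ≠ 3)
    (q : ℤ_[p]) (hq : (p : ℤ_[p]) ∣ q - 1) (hq1 : q ≠ 1)
    (ι : ℤ_[p] → ℤ_[p]) (hcont : Continuous ι)
    (hval : ∀ n : ℕ, ι n = ∑ i ∈ Finset.range n, q ^ i)
    (z : ℤ_[p]) (hz : ι z = z) :
    z = 0 ∨ z = 1 := by
  have hq' : ‖q - 1‖ ≤ (p : ℝ)⁻¹ := by
    obtain ⟨u, hu⟩ := hq
    rw [hu, norm_mul, PadicInt.norm_p]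
    exact mul_le_of_le_one_right (by positivity) (PadicInt.norm_le_one u)
  have hident : ∀ x : ℤ_[p], ‖(2 : ℤ_[p])‖ * ‖ι x - x‖ = ‖q - 1‖ * ‖x * (x - 1)‖ := by
    refine congrFun (PadicInt.denseRange_natCast.equalizer (by fun_prop) (by fun_prop) ?_)
    ext n
    simpa [hval] using PadicInt.norm_two_mul_norm_geom_sum_sub_natCast hp3 hq' n
  have hzero : z * (z - 1) = 0 := by
    simpa [hz, sub_ne_zero.2 hq1] using (hident z).symm
  simpa [sub_eq_zero] using hzero
end

section
/- Let q ∈ 1 + 9ℤ_3, q ≠ 1. If z ∈ ℤ_3 satisfies ι_q(z) = z, then z = 0 or z = 1. -/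
/-!
Write `q = 1 + c` with `p² ∣ c`. For `n ∈ ℕ` we have `(ι n - n) c = q ^ n - 1 - n c =
∑_{k ≥ 2} C(n, k) c ^ k`, and the `k = 2` term strictly dominates all others in the ultrametric
norm: `C(n, k) C(k, 2) = C(n, 2) C(n - 2, k - 2)` gives `|C(n, k)| |C(k, 2)| ≤ |C(n, 2)|`, while
`|c| ^ (k - 2) ≤ p ^ (-2 (k - 2)) < |C(k, 2)|` because `C(k, 2) < 4 ^ (k - 2)`. Hence
`|2 (ι n - n)| = |n (n - 1) c|` on `ℕ`, and by continuity and density on all of `ℤ_p`; a fixed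
point `z` therefore satisfies `z (z - 1) c = 0`.
-/

open Finset

theorem Nat.choose_two_lt_four_pow {k : ℕ} (hk : 3 ≤ k) : k.choose 2 < 4 ^ (k - 2) := by
  induction k, hk using Nat.le_induction with
  | base => decide
  | succ k hk ih =>
    have hsucc : (k + 1).choose 2 = k + k.choose 2 := by
      simpa using Nat.choose_succ_succ' k 1
    have htwo : 2 * k.choose 2 = k * (k - 1) := by
      rw [Nat.choose_two_right]; exact Nat.mul_div_cancel' (Nat.even_mul_pred_self k).two_dvd
    have hk' : k ≤ k.choose 2 := by
      obtain ⟨j, rfl⟩ : ∃ j, k = j + 3 := ⟨k - 3, by omega⟩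
      simp only [show j + 3 - 1 = j + 2 by omega] at htwo
      nlinarith
    rw [hsucc, show k + 1 - 2 = k - 2 + 1 by omega, pow_succ]
    omega

theorem one_add_pow_add_two {R : Type*} [CommRing R] (c : R) (m : ℕ) :
    (1 + c) ^ (m + 2) = 1 + (m + 2 : ℕ) * c + (m + 2).choose 2 * c ^ 2 +
      ∑ j ∈ range m, c ^ (j + 3) * (m + 2).choose (j + 3) := by
  rw [add_comm, add_pow, sum_range_succ', sum_range_succ', sum_range_succ']
  simp only [zero_add, add_assoc, Nat.reduceAdd, one_pow, mul_one, pow_zero, Nat.choose_zero_right,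
    Nat.choose_one_right, Nat.cast_one]
  ring

theorem IsUltrametricDist.norm_sum_lt {M ι : Type*} [SeminormedAddCommGroup M]
    [IsUltrametricDist M] {s : Finset ι} {f : ι → M} {r : ℝ} (hr : 0 < r)
    (hf : ∀ i ∈ s, ‖f i‖ < r) : ‖∑ i ∈ s, f i‖ < r :=
  Finset.sum_induction f (‖·‖ < r)
    (fun _ _ ha hb => (norm_add_le_max _ _).trans_lt (max_lt ha hb)) (by simpa using hr) hf

namespace PadicInt

variable {p : ℕ} [Fact p.Prime]

theorem norm_p_pow_lt_norm_natCast {m t : ℕ} (hm : m ≠ 0) (hmt : m < p ^ t) :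
    ‖(p : ℤ_[p]) ^ t‖ < ‖(m : ℤ_[p])‖ := by
  rw [norm_p_pow]
  by_contra! h
  have hdvd : ((p ^ t : ℕ) : ℤ) ∣ m := by
    exact_mod_cast (norm_int_le_pow_iff_dvd (k := m) (n := t)).mp (by simpa using h)
  have := Nat.le_of_dvd (Nat.pos_of_ne_zero hm) (Int.natCast_dvd_natCast.mp hdvd)
  omega

theorem norm_le_norm_of_dvd {a b : ℤ_[p]} (h : a ∣ b) : ‖b‖ ≤ ‖a‖ := by
  obtain ⟨d, rfl⟩ := h
  rw [norm_mul]
  exact mul_le_of_le_one_right (norm_nonneg _) (norm_le_one d)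

theorem norm_pow_lt_norm_choose_two {c : ℤ_[p]} (hc : (p : ℤ_[p]) ^ 2 ∣ c) {k : ℕ}
    (hk : 3 ≤ k) :
    ‖c‖ ^ (k - 2) < ‖(k.choose 2 : ℤ_[p])‖ := by
  have hp : 4 ≤ p ^ 2 := Nat.pow_le_pow_left (Fact.out : p.Prime).two_le 2
  calc ‖c‖ ^ (k - 2) ≤ ‖(p : ℤ_[p]) ^ 2‖ ^ (k - 2) :=
        pow_le_pow_left₀ (norm_nonneg _) (norm_le_norm_of_dvd hc) _
    _ = ‖(p : ℤ_[p]) ^ (2 * (k - 2))‖ := by rw [pow_mul, norm_pow _ (k - 2)]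
    _ < ‖(k.choose 2 : ℤ_[p])‖ := by
      refine norm_p_pow_lt_norm_natCast (Nat.choose_pos (by omega)).ne' ?_
      calc k.choose 2 < 4 ^ (k - 2) := Nat.choose_two_lt_four_pow hk
        _ ≤ (p ^ 2) ^ (k - 2) := Nat.pow_le_pow_left hp _
        _ = p ^ (2 * (k - 2)) := by rw [pow_mul]

theorem norm_choose_mul_pow_lt {c : ℤ_[p]} (hc : (p : ℤ_[p]) ^ 2 ∣ c) (hc0 : c ≠ 0) {n k : ℕ}
    (hn : 2 ≤ n) (hk : 3 ≤ k) :
    ‖(n.choose k : ℤ_[p]) * c ^ k‖ < ‖(n.choose 2 : ℤ_[p]) * c ^ 2‖ := by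
  rw [norm_mul, norm_mul, norm_pow, norm_pow]
  rcases eq_or_ne (n.choose k) 0 with h0 | h0
  · have hn2 : 0 < ‖(n.choose 2 : ℤ_[p])‖ := by simpa using (Nat.choose_pos hn).ne'
    rw [h0, Nat.cast_zero, norm_zero, zero_mul]
    positivity
  have hnk : 0 < ‖(n.choose k : ℤ_[p])‖ := by simpa using h0
  have hmul :
      ‖(n.choose k : ℤ_[p])‖ * ‖(k.choose 2 : ℤ_[p])‖ ≤ ‖(n.choose 2 : ℤ_[p])‖ := by
    rw [← norm_mul, ← Nat.cast_mul, Nat.choose_mul (by omega), Nat.cast_mul]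
    exact norm_le_norm_of_dvd (dvd_mul_right _ _)
  calc ‖(n.choose k : ℤ_[p])‖ * ‖c‖ ^ k
        = ‖(n.choose k : ℤ_[p])‖ * ‖c‖ ^ (k - 2) * ‖c‖ ^ 2 := by
        rw [mul_assoc, ← pow_add, Nat.sub_add_cancel (by omega)]
    _ < ‖(n.choose k : ℤ_[p])‖ * ‖(k.choose 2 : ℤ_[p])‖ * ‖c‖ ^ 2 := by
        gcongr
        exact norm_pow_lt_norm_choose_two hc hk
    _ ≤ ‖(n.choose 2 : ℤ_[p])‖ * ‖c‖ ^ 2 := by gcongr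

theorem norm_geom_sum_sub_natCast_mul {c : ℤ_[p]} (hc : (p : ℤ_[p]) ^ 2 ∣ c) (n : ℕ) :
    ‖(∑ i ∈ range n, (1 + c) ^ i - n) * c‖ = ‖(n.choose 2 : ℤ_[p]) * c ^ 2‖ := by
  rcases eq_or_ne c 0 with rfl | hc0
  · simp
  rcases lt_or_ge n 2 with hn | hn
  · interval_cases n <;> simp
  obtain ⟨m, rfl⟩ : ∃ m, n = m + 2 := ⟨n - 2, by omega⟩
  have hexp : (∑ i ∈ range (m + 2), (1 + c) ^ i - (m + 2 : ℕ)) * c =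
      (m + 2).choose 2 * c ^ 2 + ∑ j ∈ range m, c ^ (j + 3) * (m + 2).choose (j + 3) := by
    have := geom_sum_mul (1 + c) (m + 2)
    rw [add_sub_cancel_left] at this
    rw [sub_mul, this, one_add_pow_add_two]
    ring
  have htail : ‖∑ j ∈ range m, c ^ (j + 3) * (m + 2).choose (j + 3)‖ <
      ‖((m + 2).choose 2 : ℤ_[p]) * c ^ 2‖ :=
    IsUltrametricDist.norm_sum_lt (norm_pos_iff.mpr <|
        mul_ne_zero (by simpa using (Nat.choose_pos (by omega)).ne') (pow_ne_zero _ hc0))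
      fun j _ => by rw [mul_comm]; exact norm_choose_mul_pow_lt hc hc0 (by omega) (by omega)
  rw [hexp, IsUltrametricDist.norm_add_eq_max_of_norm_ne_norm htail.ne', max_eq_left htail.le]

theorem norm_two_mul_geom_sum_sub_natCast {c : ℤ_[p]} (hc : (p : ℤ_[p]) ^ 2 ∣ c)
    (hc0 : c ≠ 0) (n : ℕ) : ‖2 * (∑ i ∈ range n, (1 + c) ^ i - n)‖ = ‖(n : ℤ_[p]) * (n - 1) * c‖ := by
  refine mul_right_cancel₀ (norm_ne_zero_iff.mpr hc0) ?_
  calc ‖2 * (∑ i ∈ range n, (1 + c) ^ i - n)‖ * ‖c‖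
      = ‖(2 : ℤ_[p])‖ * ‖(n.choose 2 : ℤ_[p]) * c ^ 2‖ := by
        rw [← norm_geom_sum_sub_natCast_mul hc, ← norm_mul, ← norm_mul, mul_assoc]
    _ = ‖(n : ℤ_[p]) * (n - 1) * c‖ * ‖c‖ := by
        rw [← norm_mul, ← norm_mul, ← mul_assoc, Nat.two_mul_cast_choose_two]
        ring_nf

theorem norm_two_mul_sub_self_of_eq_geom_sum {q : ℤ_[p]} (hq : (p : ℤ_[p]) ^ 2 ∣ q - 1)
    (hq1 : q ≠ 1) {ι : ℤ_[p] → ℤ_[p]} (hcont : Continuous ι)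
    (hval : ∀ n : ℕ, ι n = ∑ i ∈ range n, q ^ i) (z : ℤ_[p]) :
    ‖2 * (ι z - z)‖ = ‖z * (z - 1) * (q - 1)‖ := by
  refine congrFun (denseRange_natCast.equalizer (g := fun z => ‖2 * (ι z - z)‖)
    (h := fun z => ‖z * (z - 1) * (q - 1)‖) (by fun_prop) (by fun_prop) (funext fun n => ?_)) z
  have := norm_two_mul_geom_sum_sub_natCast hq (sub_ne_zero.mpr hq1) n
  rwa [add_sub_cancel, ← hval] at this

end PadicInt

/-- For `q ∈ 1 + 9ℤ_3`, `q ≠ 1`: the only 3-adic fixed points of `ι_q` are `0` and `1`. -/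
theorem no_nontrivial_fixed_points_mod_nine (q : ℤ_[3]) (hq : (9 : ℤ_[3]) ∣ q - 1)
    (hq1 : q ≠ 1)
    (ι : ℤ_[3] → ℤ_[3]) (hcont : Continuous ι)
    (hval : ∀ n : ℕ, ι n = ∑ i ∈ Finset.range n, q ^ i)
    (z : ℤ_[3]) (hz : ι z = z) :
    z = 0 ∨ z = 1 := by
  have h := PadicInt.norm_two_mul_sub_self_of_eq_geom_sum (by norm_num [hq]) hq1 hcont hval z
  rw [hz, sub_self, mul_zero, norm_zero, eq_comm, norm_eq_zero, mul_eq_zero, mul_eq_zero,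
    sub_eq_zero, sub_eq_zero] at h
  tauto
end

section
/- ι_4(−1/2) = −1/2 in ℤ_3; that is, −1/2 is a nontrivial 3-adic fixed point of ι_4. -/
/-! The integers `a k = (3 ^ k - 1) / 2` tend to `z = -1/2` in `ℤ_[3]`. Since `2 * 4 ^ a k = 2 ^ 3 ^ k`,
`6 * (ι (a k) - z) = 2 ^ 3 ^ k + 1`, which lifting the exponent shows divisible by `3 ^ (k + 1)`;
so `ι (a k)` tends to `z` as well, and continuity of `ι` gives `ι z = z`. -/

open Filter Topology

namespace PadicInt

variable {p : ℕ} [Fact p.Prime]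

theorem tendsto_of_pow_dvd_sub {x : ℕ → ℤ_[p]} {z : ℤ_[p]} (h : ∀ k, (p : ℤ_[p]) ^ k ∣ x k - z) :
    Tendsto x atTop (𝓝 z) := by
  have hp : (1 : ℝ) < p := mod_cast (Fact.out : p.Prime).one_lt
  rw [tendsto_iff_norm_sub_tendsto_zero]
  refine squeeze_zero (fun _ ↦ norm_nonneg _) (fun k ↦ ?_)
    (tendsto_pow_atTop_nhds_zero_of_lt_one (by positivity) (inv_lt_one_of_one_lt₀ hp))
  rw [inv_pow, ← zpow_natCast, ← zpow_neg, norm_le_pow_iff_mem_span_pow, Ideal.mem_span_singleton]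
  exact h k

end PadicInt

theorem three_pow_succ_dvd_two_pow_three_pow_add_one {R : Type*} [CommRing R] (k : ℕ) :
    (3 : R) ^ (k + 1) ∣ 2 ^ 3 ^ k + 1 := by
  have h := dvd_sub_pow_of_dvd_sub (p := 3) (a := (2 : R)) (b := -1) ⟨1, by norm_num⟩ k
  rwa [(Odd.pow (by decide : Odd 3)).neg_one_pow, sub_neg_eq_add] at h

/-- `ι_4(−1/2) = −1/2` in `ℤ_3`: the element `z` with `2z = −1` is a nontrivial
3-adic fixed point of `ι_4`. -/
theorem iota_four_fixed_point
    (ι : ℤ_[3] → ℤ_[3]) (hcont : Continuous ι)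
    (hval : ∀ n : ℕ, ι n = ∑ i ∈ Finset.range n, (4 : ℤ_[3]) ^ i)
    (z : ℤ_[3]) (hz : 2 * z = -1) :
    ι z = z ∧ z ≠ 0 ∧ z ≠ 1 := by
  have h2 : IsUnit (2 : ℤ_[3]) := .of_mul_eq_one (-z) (by linear_combination -hz)
  set a : ℕ → ℕ := fun k ↦ 3 ^ k / 2
  have ha : ∀ k, 2 * a k + 1 = 3 ^ k := fun k ↦
    Nat.two_mul_div_two_add_one_of_odd (Odd.pow (by decide))
  have hιa : ∀ k, 3 * (2 * (ι (a k) - z)) = 2 ^ 3 ^ k + 1 := fun k ↦ by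
    have hgeom := geom_sum_mul (4 : ℤ_[3]) (a k)
    have hpow : (2 : ℤ_[3]) ^ 3 ^ k = 2 * 4 ^ a k := by
      rw [← ha, pow_succ, pow_mul]
      norm_num
      ring
    rw [hval, hpow]
    norm_num at hgeom
    linear_combination 2 * hgeom - 3 * hz
  have hx : Tendsto (fun k ↦ (a k : ℤ_[3])) atTop (𝓝 z) :=
    PadicInt.tendsto_of_pow_dvd_sub fun k ↦ h2.dvd_mul_left.1
      ⟨1, by linear_combination (by exact_mod_cast ha k : (2 * a k + 1 : ℤ_[3]) = 3 ^ k) - hz⟩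
  have hy : Tendsto (fun k ↦ ι (a k)) atTop (𝓝 z) := PadicInt.tendsto_of_pow_dvd_sub fun k ↦ by
    have h := three_pow_succ_dvd_two_pow_three_pow_add_one (R := ℤ_[3]) k
    rw [← hιa, pow_succ', mul_dvd_mul_iff_left (by norm_num : (3 : ℤ_[3]) ≠ 0)] at h
    exact_mod_cast h2.dvd_mul_left.1 h
  refine ⟨tendsto_nhds_unique ((hcont.tendsto z).comp hx) hy, ?_, ?_⟩ <;>
    rintro rfl <;> norm_num at hz
end

section
/- Let n ≥ 3 and q ∈ ℤ_3 with q ≡ 7 (mod 9). Then for every c ∈ ℤ_3, ι_q(c·3^{n−2}) ≡ c·3^{n−2} (mod 3^n). -/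
/-!
For natural `N`, `ι_q(N) = ∑_{i<N} q^i`. Cutting this sum into `k` blocks of length `b` gives
`∑_{i<kb} q^i = (∑_{i<b} q^i)(∑_{j<k} Q^j)` with `Q = q^b`. For `b = 3^(m+1)` we have
`Q ≡ 1 (mod 3^(m+2))`, so the second factor is `≡ k`, and an induction on `m`, started by
`27 ∣ q² + q - 2 = (q - 1)(q + 2)` (this is where `q ≡ 7 (mod 9)` enters), gives
`∑_{i<b} q^i ≡ b (mod 3^(m+3))`. Hence `ι_q(N) ≡ N (mod 3^(m+3))` whenever `3^(m+1) ∣ N`, and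
the congruence extends from `ℕ` to `ℤ_3` since divisibility by `3^n` is a closed condition and
`ℕ` is dense in `ℤ_3`.
-/

open Finset

theorem geom_sum_range_mul {R : Type*} [Semiring R] (x : R) (a b : ℕ) :
    ∑ i ∈ range (a * b), x ^ i = (∑ i ∈ range a, x ^ i) * ∑ j ∈ range b, (x ^ a) ^ j := by
  induction b with
  | zero => simp
  | succ b ih =>
    rw [Nat.mul_succ, sum_range_add, ih, sum_range_succ, mul_add, ← pow_mul]
    congr 1
    rw [sum_mul]
    exact sum_congr rfl fun i _ => by rw [add_comm, pow_add]

theorem sub_one_dvd_geom_sum_sub_natCast {R : Type*} [CommRing R] (x : R) (n : ℕ) :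
    x - 1 ∣ ∑ i ∈ range n, x ^ i - n := by
  have : ∑ i ∈ range n, x ^ i - n = ∑ i ∈ range n, (x ^ i - 1) := by simp [sum_sub_distrib]
  exact this ▸ dvd_sum fun i _ => sub_one_dvd_pow_sub_one x i

theorem three_mul_sub_one_dvd_geom_sum_three_sub {R : Type*} [CommRing R] {x : R}
    (hx : 3 ∣ x - 1) : 3 * (x - 1) ∣ ∑ i ∈ range 3, x ^ i - 3 := by
  obtain ⟨u, hu⟩ := hx
  refine ⟨u + 1, ?_⟩
  simp only [sum_range_succ, sum_range_zero]
  linear_combination (x - 1) * hu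

theorem three_pow_succ_dvd_pow_three_pow_sub_one {R : Type*} [CommRing R] {x : R}
    (hx : 3 ∣ x - 1) (m : ℕ) : (3 : R) ^ (m + 1) ∣ x ^ 3 ^ m - 1 := by
  simpa using dvd_sub_pow_of_dvd_sub (R := R) (p := 3) (b := 1) (by exact_mod_cast hx) m

section NineDvdSubSeven

variable {R : Type*} [CommRing R] {q : R}

theorem three_dvd_sub_one_of_nine_dvd_sub_seven (hq : 9 ∣ q - 7) : 3 ∣ q - 1 := by
  obtain ⟨a, ha⟩ := hq
  exact ⟨3 * a + 2, by linear_combination ha⟩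

theorem three_pow_dvd_geom_sum_three_pow_sub (hq : 9 ∣ q - 7) (m : ℕ) :
    (3 : R) ^ (m + 3) ∣ ∑ i ∈ range (3 ^ (m + 1)), q ^ i - 3 ^ (m + 1) := by
  induction m with
  | zero =>
    obtain ⟨a, ha⟩ := hq
    refine ⟨(2 + 3 * a) * (1 + a), ?_⟩
    simp only [zero_add, pow_one, sum_range_succ, sum_range_zero]
    linear_combination (q + 8 + 9 * a) * ha
  | succ m ih =>
    rw [Nat.pow_succ, geom_sum_range_mul]
    set S := ∑ i ∈ range (3 ^ (m + 1)), q ^ i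
    set Q := q ^ 3 ^ (m + 1)
    have hQ : (3 : R) ^ (m + 2) ∣ Q - 1 :=
      three_pow_succ_dvd_pow_three_pow_sub_one (three_dvd_sub_one_of_nine_dvd_sub_seven hq) (m + 1)
    have hT : (3 : R) ^ (m + 3) ∣ ∑ j ∈ range 3, Q ^ j - 3 :=
      (pow_succ' (3 : R) (m + 2) ▸ mul_dvd_mul_left 3 hQ).trans
        (three_mul_sub_one_dvd_geom_sum_three_sub ((dvd_pow_self 3 (by omega)).trans hQ))
    have hT3 : (3 : R) ∣ ∑ j ∈ range 3, Q ^ j := by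
      simpa using ((dvd_pow_self 3 (by omega)).trans hT).add (dvd_refl (3 : R))
    rw [show S * ∑ j ∈ range 3, Q ^ j - 3 ^ (m + 1 + 1) =
      (S - 3 ^ (m + 1)) * ∑ j ∈ range 3, Q ^ j + 3 ^ (m + 1) * (∑ j ∈ range 3, Q ^ j - 3) by ring]
    refine dvd_add (pow_succ (3 : R) (m + 3) ▸ mul_dvd_mul ih hT3) ?_
    exact (pow_dvd_pow 3 (by omega : m + 1 + 3 ≤ m + 1 + (m + 3))).trans
      (pow_add (3 : R) _ _ ▸ mul_dvd_mul_left _ hT)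

theorem three_pow_dvd_geom_sum_sub_of_dvd (hq : 9 ∣ q - 7) {m N : ℕ} (hN : 3 ^ (m + 1) ∣ N) :
    (3 : R) ^ (m + 3) ∣ ∑ i ∈ range N, q ^ i - N := by
  obtain ⟨k, rfl⟩ := hN
  rw [geom_sum_range_mul]
  set S := ∑ i ∈ range (3 ^ (m + 1)), q ^ i
  have hT : (3 : R) ^ (m + 2) ∣ ∑ j ∈ range k, (q ^ 3 ^ (m + 1)) ^ j - k :=
    (three_pow_succ_dvd_pow_three_pow_sub_one (three_dvd_sub_one_of_nine_dvd_sub_seven hq)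
      (m + 1)).trans (sub_one_dvd_geom_sum_sub_natCast _ k)
  rw [show S * ∑ j ∈ range k, (q ^ 3 ^ (m + 1)) ^ j - ((3 ^ (m + 1) * k : ℕ) : R) =
    (S - 3 ^ (m + 1)) * ∑ j ∈ range k, (q ^ 3 ^ (m + 1)) ^ j +
      3 ^ (m + 1) * (∑ j ∈ range k, (q ^ 3 ^ (m + 1)) ^ j - k) by push_cast; ring]
  refine dvd_add (dvd_mul_of_dvd_left (three_pow_dvd_geom_sum_three_pow_sub hq m) _) ?_
  exact (pow_dvd_pow 3 (by omega : m + 3 ≤ m + 1 + (m + 2))).trans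
    (pow_add (3 : R) _ _ ▸ mul_dvd_mul_left _ hT)

end NineDvdSubSeven

theorem PadicInt.isClosed_setOf_pow_dvd {p : ℕ} [Fact p.Prime] (n : ℕ) :
    IsClosed {x : ℤ_[p] | (p : ℤ_[p]) ^ n ∣ x} := by
  simp_rw [← Ideal.mem_span_singleton, ← PadicInt.norm_le_pow_iff_mem_span_pow]
  exact isClosed_le continuous_norm continuous_const

/-- For `n ≥ 3` and `q ≡ 7 (mod 9)` in `ℤ_3`: `ι_q(c·3^{n−2}) ≡ c·3^{n−2} (mod 3^n)`
for every `c ∈ ℤ_3`. -/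
theorem fixed_points_seven (n : ℕ) (hn : 3 ≤ n)
    (q : ℤ_[3]) (hq : (9 : ℤ_[3]) ∣ q - 7)
    (ι : ℤ_[3] → ℤ_[3]) (hcont : Continuous ι)
    (hval : ∀ k : ℕ, ι k = ∑ i ∈ Finset.range k, q ^ i)
    (c : ℤ_[3]) :
    (3 : ℤ_[3]) ^ n ∣ ι (c * 3 ^ (n - 2)) - c * 3 ^ (n - 2) := by
  obtain ⟨m, rfl⟩ : ∃ m, n = m + 3 := ⟨n - 3, by omega⟩
  rw [show m + 3 - 2 = m + 1 by omega]
  have hclosed :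
      IsClosed {c : ℤ_[3] | (3 : ℤ_[3]) ^ (m + 3) ∣ ι (c * 3 ^ (m + 1)) - c * 3 ^ (m + 1)} := by
    simpa using (PadicInt.isClosed_setOf_pow_dvd (p := 3) (m + 3)).preimage
      (f := fun c : ℤ_[3] => ι (c * 3 ^ (m + 1)) - c * 3 ^ (m + 1)) (by fun_prop)
  refine PadicInt.denseRange_natCast.induction_on c hclosed fun k => ?_
  have hk : (k : ℤ_[3]) * 3 ^ (m + 1) = ((3 ^ (m + 1) * k : ℕ) : ℤ_[3]) := by push_cast; ring
  simp only [hk, hval]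
  exact three_pow_dvd_geom_sum_sub_of_dvd hq (dvd_mul_right _ _)
end

section
/- Suppose z ∈ ℤ_3 with 1 ≤ v_3(z(z−1)) < ∞. Then there exists a unique q ∈ 1 + 3ℤ_3 with q ≠ 1 such that ι_q(z) = z. Moreover if z ≡ 0 (mod 3) then q ≡ 7 (mod 9), and if z ≡ 1 (mod 3) then q ≡ 4 (mod 9). -/
/-!
Write `q = 1 + s` with `3 ∣ s`. Mahler's expansion `q^x = ∑ₖ C(x, k) sᵏ` gives
`ι_q(x) = ∑ₖ C(x, k + 1) sᵏ`, so for `q ≠ 1` the equation `ι_q(z) = z` reads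
`∑ₖ C(z, k + 2) sᵏ = 0`, i.e. `C(z,2) (3 + (z - 2) s) = -3 s² ∑ₖ C(z, k + 4) sᵏ`.
Since `C(k + 4, 2) C(z, k + 4) = C(z, 2) C(z - 2, k + 2)` and `v₃ C(k + 4, 2) ≤ k + 1`, the right
side divided by `C(z, 2)` is a `1/3`-Lipschitz function of `s` of size at most `1/9` on `3ℤ₃`.
When `3 ∣ z(z - 1)`, `z - 2` is a unit, so `s ↦ -(z - 2)⁻¹ (3 + …)` is a contraction of `3ℤ₃`
whose unique fixed point is the unique solution, and `3 + (z - 2) s ≡ 0 (mod 9)` determines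
`q` modulo `9`.
-/

open Finset IsUltrametricDist

namespace IotaFixedPoint

theorem exists_unique_isFixedPt_of_lipschitzOnWith {α : Type*} [MetricSpace α] [CompleteSpace α]
    {f : α → α} {s : Set α} {K : NNReal} (hK : K < 1) (hs : IsClosed s) (hne : s.Nonempty)
    (hf : Set.MapsTo f s s) (hl : LipschitzOnWith K f s) :
    ∃! x, x ∈ s ∧ Function.IsFixedPt f x := by
  have := hs.completeSpace_coe
  have := hne.to_subtype
  have hc : ContractingWith K (hf.restrict f s s) := ⟨hK, hf.lipschitzOnWith_iff_restrict.mp hl⟩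
  let x : s := ContractingWith.fixedPoint (hf.restrict f s s) hc
  refine ⟨x, ⟨x.2, congrArg Subtype.val hc.fixedPoint_isFixedPt⟩, ?_⟩
  rintro y ⟨hy, hfy⟩
  exact congrArg Subtype.val (hc.fixedPoint_unique (x := ⟨y, hy⟩) (Subtype.ext hfy))

lemma norm_pow_sub_pow_le {K : Type*} [NormedField K] [IsUltrametricDist K] {s t : K} {r : ℝ}
    (hs : ‖s‖ ≤ r) (ht : ‖t‖ ≤ r) (n : ℕ) : ‖s ^ (n + 1) - t ^ (n + 1)‖ ≤ r ^ n * ‖s - t‖ := by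
  have hr : 0 ≤ r := (norm_nonneg s).trans hs
  rw [← geom_sum₂_mul, norm_mul]
  refine mul_le_mul_of_nonneg_right (norm_sum_le_of_forall_le_of_nonneg (pow_nonneg hr n)
    fun i hi => ?_) (norm_nonneg _)
  have hin : i ≤ n := Nat.lt_succ_iff.mp (mem_range.mp hi)
  calc ‖s ^ i * t ^ (n + 1 - 1 - i)‖ = ‖s‖ ^ i * ‖t‖ ^ (n - i) := by simp
    _ ≤ r ^ i * r ^ (n - i) := by gcongr
    _ = r ^ n := by rw [← pow_add, Nat.add_sub_cancel' hin]

section Divisibility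

variable {R : Type*} [CommRing R]

lemma not_three_dvd_sub_two {z : R} (h3 : ¬IsUnit (3 : R)) (hz : 3 ∣ z ∨ 3 ∣ z - 1) :
    ¬3 ∣ z - 2 := by
  intro h
  refine h3 (isUnit_of_dvd_one ?_)
  rcases hz with hz | hz
  · convert (dvd_refl 3).sub (hz.sub h) using 1; ring
  · convert hz.sub h using 1; ring

lemma nine_dvd_sub_seven {z q : R} (hz : 3 ∣ z) (hq : 3 ∣ q - 1)
    (h : 9 ∣ (z - 2) * (q - 1) + 3) : 9 ∣ q - 7 := by
  have h9 : (9 : R) ∣ z * (q - 1) := by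
    convert mul_dvd_mul hz hq using 1; norm_num
  have h2 : (9 : R) ∣ 2 * (q - 7) := by
    convert (h9.sub h).sub (dvd_refl 9) using 1; ring
  convert (h2.mul_left 5).sub (dvd_mul_right 9 (q - 7)) using 1; ring

lemma nine_dvd_sub_four {z q : R} (hz : 3 ∣ z - 1) (hq : 3 ∣ q - 1)
    (h : 9 ∣ (z - 2) * (q - 1) + 3) : 9 ∣ q - 4 := by
  have h9 : (9 : R) ∣ (z - 1) * (q - 1) := by
    convert mul_dvd_mul hz hq using 1; norm_num
  convert h9.sub h using 1; ring

end Divisibility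

section Mahler

variable {p : ℕ} [Fact p.Prime]

lemma pow_dvd_iff_norm_le (x : ℤ_[p]) (n : ℕ) :
    (p : ℤ_[p]) ^ n ∣ x ↔ ‖x‖ ≤ (p : ℝ) ^ (-n : ℤ) :=
  Ideal.mem_span_singleton.symm.trans (PadicInt.norm_le_pow_iff_mem_span_pow x n).symm

/-- `binomialSeries x a s = ∑ₖ C(x, k + a) sᵏ`: for `a = 0` this is `(1 + s)^x`, for `a = 1` it
is `ι_{1+s}(x)`. -/
noncomputable def binomialSeries (x : ℤ_[p]) (a : ℕ) (s : ℚ_[p]) : ℚ_[p] :=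
  ∑' k : ℕ, (mahler (k + a) x : ℚ_[p]) * s ^ k

lemma norm_mahler_mul_pow_le (x : ℤ_[p]) (a k : ℕ) (s : ℚ_[p]) :
    ‖(mahler (k + a) x : ℚ_[p]) * s ^ k‖ ≤ ‖s‖ ^ k := by
  rw [norm_mul, norm_pow, ← PadicInt.norm_def]
  exact mul_le_of_le_one_left (by positivity) (PadicInt.norm_le_one _)

lemma summable_mahler_mul_pow (x : ℤ_[p]) (a : ℕ) {s : ℚ_[p]} (hs : ‖s‖ < 1) :
    Summable fun k : ℕ => (mahler (k + a) x : ℚ_[p]) * s ^ k :=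
  .of_norm_bounded (summable_geometric_of_lt_one (norm_nonneg s) hs)
    (norm_mahler_mul_pow_le x a · s)

lemma binomialSeries_eq_add_mul (x : ℤ_[p]) (a : ℕ) {s : ℚ_[p]} (hs : ‖s‖ < 1) :
    binomialSeries x a s = mahler a x + s * binomialSeries x (a + 1) s := by
  rw [binomialSeries, (summable_mahler_mul_pow x a hs).tsum_eq_zero_add, binomialSeries,
    ← tsum_mul_left]
  simp only [zero_add, pow_zero, mul_one, pow_succ]
  congr 1
  refine tsum_congr fun k => ?_
  rw [add_right_comm, add_assoc]
  ring

lemma continuous_binomialSeries (a : ℕ) {s : ℚ_[p]} (hs : ‖s‖ < 1) :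
    Continuous fun x : ℤ_[p] => binomialSeries x a s :=
  continuous_tsum
    (fun k => (continuous_subtype_val.comp (mahler (k + a)).continuous).mul continuous_const)
    (summable_geometric_of_lt_one (norm_nonneg s) hs) (fun k x => norm_mahler_mul_pow_le x a k s)

lemma binomialSeries_natCast_zero (n : ℕ) (s : ℚ_[p]) :
    binomialSeries (n : ℤ_[p]) 0 s = (1 + s) ^ n := by
  rw [binomialSeries, tsum_eq_sum (s := range (n + 1)), add_comm (1 : ℚ_[p]), add_pow]
  · refine sum_congr rfl fun k _ => ?_
    simp [mahler_natCast_eq, mul_comm]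
  · intro k hk
    simp [mahler_natCast_eq, Nat.choose_eq_zero_of_lt (by simpa using hk : n < k)]

lemma sub_one_mul_eq_binomialSeries_sub_one {f : ℤ_[p] → ℤ_[p]} (hf : Continuous f) {q : ℤ_[p]}
    (hfn : ∀ n : ℕ, f n = ∑ i ∈ range n, q ^ i) (hq : ‖(q : ℚ_[p]) - 1‖ < 1) (x : ℤ_[p]) :
    ((q : ℚ_[p]) - 1) * f x = binomialSeries x 0 ((q : ℚ_[p]) - 1) - 1 := by
  have hcont : Continuous fun x => ((q : ℚ_[p]) - 1) * f x := by fun_prop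
  refine congrFun (PadicInt.denseRange_natCast.equalizer hcont
    ((continuous_binomialSeries 0 hq).sub continuous_const) (funext fun n => ?_)) x
  simp only [Function.comp_apply, hfn, Pi.sub_apply, binomialSeries_natCast_zero, add_sub_cancel,
    PadicInt.coe_sum, PadicInt.coe_pow]
  rw [mul_comm, geom_sum_mul]

lemma eq_self_iff_binomialSeries_two_eq_zero {f : ℤ_[p] → ℤ_[p]} (hf : Continuous f)
    {q : ℤ_[p]} (hfn : ∀ n : ℕ, f n = ∑ i ∈ range n, q ^ i) (hq : ‖(q : ℚ_[p]) - 1‖ < 1)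
    (hq1 : q ≠ 1) (z : ℤ_[p]) : f z = z ↔ binomialSeries z 2 ((q : ℚ_[p]) - 1) = 0 := by
  have hs : (q : ℚ_[p]) - 1 ≠ 0 := sub_ne_zero.mpr fun h => hq1 (Subtype.ext h)
  have key := sub_one_mul_eq_binomialSeries_sub_one hf hfn hq z
  rw [binomialSeries_eq_add_mul z 0 hq, binomialSeries_eq_add_mul z 1 hq] at key
  simp only [mahler_apply, Ring.choose_zero_right, Ring.choose_one_right, PadicInt.coe_one,
    add_sub_cancel_left, one_add_one_eq_two] at key
  rw [show f z = z ↔ (f z : ℚ_[p]) = z from ⟨fun h => by rw [h], Subtype.ext⟩]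
  constructor
  · intro h
    rw [h, mul_add, left_eq_add] at key
    simpa [hs] using key
  · intro h
    rw [h, mul_zero, add_zero] at key
    exact mul_left_cancel₀ hs key

lemma mahler_two_ne_zero {z : ℤ_[p]} (hz0 : z ≠ 0) (hz1 : z ≠ 1) : mahler 2 z ≠ 0 := by
  have h : 2 * mahler 2 z = z * (z - 1) := by
    simpa [mahler_apply, Ring.choose_one_right, nsmul_eq_mul] using
      Ring.choose_smul_choose z (show 1 ≤ 2 by norm_num)
  intro h0
  rw [h0, mul_zero, eq_comm, mul_eq_zero, sub_eq_zero] at h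
  exact h.elim hz0 hz1

lemma inv_pow_log_le_norm_choose {n k : ℕ} (hkn : k ≤ n) :
    ((p : ℝ) ^ Nat.log p n)⁻¹ ≤ ‖((n.choose k : ℕ) : ℚ_[p])‖ := by
  have h0 : ((n.choose k : ℕ) : ℚ_[p]) ≠ 0 := Nat.cast_ne_zero.mpr (Nat.choose_pos hkn).ne'
  rw [Padic.norm_eq_zpow_neg_valuation h0, Padic.valuation_natCast, ← zpow_natCast, ← zpow_neg]
  refine zpow_le_zpow_right₀ (by exact_mod_cast (Fact.out : p.Prime).one_lt.le) ?_
  rw [neg_le_neg_iff, Nat.cast_le, ← Nat.factorization_def _ Fact.out]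
  exact Nat.factorization_choose_le_log

lemma norm_choose_two_mul_norm_mahler_le (z : ℤ_[p]) {n : ℕ} (hn : 2 ≤ n) :
    ‖((n.choose 2 : ℕ) : ℚ_[p])‖ * ‖mahler n z‖ ≤ ‖mahler 2 z‖ := by
  have h := Ring.choose_smul_choose z hn
  rw [nsmul_eq_mul] at h
  rw [← PadicInt.coe_natCast, ← PadicInt.norm_def, ← norm_mul, mahler_apply, mahler_apply, h,
    norm_mul]
  exact mul_le_of_le_one_right (norm_nonneg _) (PadicInt.norm_le_one _)

end Mahler

lemma norm_three : ‖(3 : ℚ_[3])‖ = 1 / 3 := by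
  simpa using Padic.norm_p (p := 3)

lemma three_dvd_iff_norm_le (x : ℤ_[3]) : 3 ∣ x ↔ ‖(x : ℚ_[3])‖ ≤ 1 / 3 := by
  simpa using pow_dvd_iff_norm_le x 1

lemma nine_dvd_iff_norm_le (x : ℤ_[3]) : 9 ∣ x ↔ ‖(x : ℚ_[3])‖ ≤ 1 / 9 := by
  have := pow_dvd_iff_norm_le x 2
  norm_num at this
  exact this

lemma norm_sub_two_eq_one {z : ℤ_[3]} (hz : 3 ∣ z * (z - 1)) : ‖(z : ℚ_[3]) - 2‖ = 1 := by
  have hp : Prime (3 : ℤ_[3]) := by simpa using PadicInt.prime_p (p := 3)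
  have h := not_three_dvd_sub_two hp.not_isUnit (hp.dvd_mul.mp hz)
  rwa [← Nat.cast_ofNat (R := ℤ_[3]) (n := 3), ← PadicInt.norm_lt_one_iff_dvd, not_lt,
    PadicInt.one_le_norm_iff] at h

lemma log_three_add_four_le (k : ℕ) : Nat.log 3 (k + 4) ≤ k + 1 := by
  refine Nat.lt_succ_iff.mp (Nat.log_lt_of_lt_pow (by omega) ?_)
  have := Nat.lt_pow_self (n := k) (by norm_num : 1 < 3)
  rw [pow_succ, pow_succ]
  omega

lemma norm_mahler_add_four_le (z : ℤ_[3]) (k : ℕ) :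
    ‖mahler (k + 4) z‖ ≤ ‖mahler 2 z‖ * 3 ^ (k + 1) := by
  have hn : ((3 : ℝ) ^ (k + 1))⁻¹ ≤ ‖(((k + 4).choose 2 : ℕ) : ℚ_[3])‖ :=
    (inv_anti₀ (by positivity) (pow_le_pow_right₀ (by norm_num) (log_three_add_four_le k))).trans
      (inv_pow_log_le_norm_choose (by omega))
  have h := norm_choose_two_mul_norm_mahler_le z (n := k + 4) (by omega)
  calc ‖mahler (k + 4) z‖ = ((3 : ℝ) ^ (k + 1))⁻¹ * ‖mahler (k + 4) z‖ * 3 ^ (k + 1) := by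
        field_simp
    _ ≤ ‖(((k + 4).choose 2 : ℕ) : ℚ_[3])‖ * ‖mahler (k + 4) z‖ * 3 ^ (k + 1) := by gcongr
    _ ≤ ‖mahler 2 z‖ * 3 ^ (k + 1) := by gcongr

lemma norm_sq_mul_binomialSeries_four_le (z : ℤ_[3]) {s : ℚ_[3]} (hs : ‖s‖ ≤ 1 / 3) :
    ‖s ^ 2 * binomialSeries z 4 s‖ ≤ ‖mahler 2 z‖ / 3 := by
  have hC : ‖binomialSeries z 4 s‖ ≤ ‖mahler 2 z‖ * 3 := by
    refine norm_tsum_le_of_forall_le_of_nonneg (by positivity) fun k => ?_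
    rw [norm_mul, norm_pow, ← PadicInt.norm_def]
    calc ‖mahler (k + 4) z‖ * ‖s‖ ^ k ≤ ‖mahler 2 z‖ * 3 ^ (k + 1) * (1 / 3) ^ k := by
          gcongr
          exact norm_mahler_add_four_le z k
      _ = ‖mahler 2 z‖ * 3 := by simp only [one_div, inv_pow]; field_simp; ring
  calc ‖s ^ 2 * binomialSeries z 4 s‖ ≤ (1 / 3) ^ 2 * (‖mahler 2 z‖ * 3) := by
        rw [norm_mul, norm_pow]
        gcongr
    _ = ‖mahler 2 z‖ / 3 := by ring

lemma norm_sq_mul_binomialSeries_four_sub_le (z : ℤ_[3]) {s t : ℚ_[3]} (hs : ‖s‖ ≤ 1 / 3)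
    (ht : ‖t‖ ≤ 1 / 3) :
    ‖s ^ 2 * binomialSeries z 4 s - t ^ 2 * binomialSeries z 4 t‖ ≤ ‖mahler 2 z‖ * ‖s - t‖ := by
  have hsum (u : ℚ_[3]) (hu : ‖u‖ ≤ 1 / 3) :=
    (summable_mahler_mul_pow z 4 (hu.trans_lt (by norm_num))).mul_left (u ^ 2)
  have hdiff : s ^ 2 * binomialSeries z 4 s - t ^ 2 * binomialSeries z 4 t
      = ∑' k : ℕ, (mahler (k + 4) z : ℚ_[3]) * (s ^ (k + 1 + 1) - t ^ (k + 1 + 1)) := by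
    rw [binomialSeries, binomialSeries, ← tsum_mul_left, ← tsum_mul_left,
      ← (hsum s hs).tsum_sub (hsum t ht)]
    exact tsum_congr fun k => by ring
  rw [hdiff]
  refine norm_tsum_le_of_forall_le_of_nonneg (by positivity) fun k => ?_
  rw [norm_mul, ← PadicInt.norm_def]
  calc ‖mahler (k + 4) z‖ * ‖s ^ (k + 1 + 1) - t ^ (k + 1 + 1)‖
      ≤ ‖mahler 2 z‖ * 3 ^ (k + 1) * ((1 / 3) ^ (k + 1) * ‖s - t‖) := by
        gcongr
        · exact norm_mahler_add_four_le z k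
        · exact norm_pow_sub_pow_le hs ht (k + 1)
    _ = ‖mahler 2 z‖ * ‖s - t‖ := by simp only [one_div, inv_pow]; field_simp

lemma norm_three_mul_div_le (z : ℤ_[3]) {s : ℚ_[3]} (hs : ‖s‖ ≤ 1 / 3) :
    ‖3 * (s ^ 2 * binomialSeries z 4 s) / mahler 2 z‖ ≤ 1 / 9 := by
  rw [norm_div, norm_mul, norm_three, ← PadicInt.norm_def]
  rcases (norm_nonneg (mahler 2 z)).eq_or_lt with h | h
  · simp [← h]
  · rw [div_le_iff₀ h]
    linarith [norm_sq_mul_binomialSeries_four_le z hs]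

/-- `3 · binomialSeries z 2 s = 0`, rewritten with `3 C(z, 3) = C(z, 2) (z - 2)` and solved for
the linear term. -/
noncomputable def contraction (z : ℤ_[3]) (s : ℚ_[3]) : ℚ_[3] :=
  -((z : ℚ_[3]) - 2)⁻¹ * (3 + 3 * (s ^ 2 * binomialSeries z 4 s) / mahler 2 z)

lemma three_mul_mahler_three (z : ℤ_[3]) :
    3 * (mahler 3 z : ℚ_[3]) = mahler 2 z * ((z : ℚ_[3]) - 2) := by
  have h := Ring.choose_smul_choose z (show 2 ≤ 3 by norm_num)
  simp only [Nat.reduceSub, Ring.choose_one_right, nsmul_eq_mul] at h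
  simp only [mahler_apply]
  exact_mod_cast congrArg (fun x : ℤ_[3] => (x : ℚ_[3])) h

lemma isFixedPt_contraction_iff {z : ℤ_[3]} (hB : mahler 2 z ≠ 0) (hz2 : (z : ℚ_[3]) - 2 ≠ 0)
    {s : ℚ_[3]} (hs : ‖s‖ < 1) :
    Function.IsFixedPt (contraction z) s ↔ binomialSeries z 2 s = 0 := by
  have hB' : (mahler 2 z : ℚ_[3]) ≠ 0 := by simpa using hB
  have key : contraction z s - s
      = -(3 * ((z : ℚ_[3]) - 2)⁻¹ * (mahler 2 z : ℚ_[3])⁻¹) * binomialSeries z 2 s := by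
    rw [binomialSeries_eq_add_mul z 2 hs, binomialSeries_eq_add_mul z 3 hs, contraction]
    field_simp
    linear_combination s * three_mul_mahler_three z
  rw [Function.IsFixedPt, ← sub_eq_zero, key, mul_eq_zero, neg_eq_zero]
  simp [hB', hz2]

lemma mapsTo_contraction {z : ℤ_[3]} (hz2 : ‖(z : ℚ_[3]) - 2‖ = 1) :
    Set.MapsTo (contraction z) (Metric.closedBall 0 (1 / 3)) (Metric.closedBall 0 (1 / 3)) := by
  intro s hs
  rw [mem_closedBall_zero_iff] at hs ⊢
  rw [contraction, norm_mul, norm_neg, norm_inv, hz2, inv_one, one_mul]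
  exact (norm_add_le_max _ _).trans
    (max_le norm_three.le ((norm_three_mul_div_le z hs).trans (by norm_num)))

lemma lipschitzOnWith_contraction {z : ℤ_[3]} (hB : mahler 2 z ≠ 0)
    (hz2 : ‖(z : ℚ_[3]) - 2‖ = 1) :
    LipschitzOnWith (1 / 3) (contraction z) (Metric.closedBall 0 (1 / 3)) := by
  refine LipschitzOnWith.of_dist_le_mul fun s hs t ht => ?_
  rw [mem_closedBall_zero_iff] at hs ht
  rw [dist_eq_norm, dist_eq_norm, contraction, contraction, ← mul_sub, norm_mul, norm_neg,
    norm_inv, hz2, inv_one, one_mul, add_sub_add_left_eq_sub, ← sub_div, ← mul_sub, norm_div,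
    norm_mul, norm_three, ← PadicInt.norm_def, div_le_iff₀ (norm_pos_iff.mpr hB)]
  have := norm_sq_mul_binomialSeries_four_sub_le z hs ht
  push_cast
  nlinarith

lemma exists_unique_isFixedPt_contraction_sub_one {z : ℤ_[3]} (hB : mahler 2 z ≠ 0)
    (hz2 : ‖(z : ℚ_[3]) - 2‖ = 1) :
    ∃! q : ℤ_[3], 3 ∣ q - 1 ∧ Function.IsFixedPt (contraction z) ((q : ℚ_[3]) - 1) := by
  obtain ⟨s, ⟨hs, hfix⟩, huniq⟩ := exists_unique_isFixedPt_of_lipschitzOnWith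
    (K := 1 / 3) (by norm_num) Metric.isClosed_closedBall ⟨0, by simp⟩ (mapsTo_contraction hz2)
    (lipschitzOnWith_contraction hB hz2)
  rw [mem_closedBall_zero_iff] at hs
  let q₀ : ℤ_[3] := ⟨1 + s, (norm_add_le_max _ _).trans (max_le norm_one.le (by linarith))⟩
  have hq₀ : (q₀ : ℚ_[3]) - 1 = s := add_sub_cancel_left 1 s
  refine ⟨q₀, ⟨(three_dvd_iff_norm_le _).mpr (show ‖(q₀ : ℚ_[3]) - 1‖ ≤ 1 / 3 from hq₀ ▸ hs),
    hq₀ ▸ hfix⟩, fun q ⟨hq, hqfix⟩ => ?_⟩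
  have hqs := huniq _ ⟨mem_closedBall_zero_iff.mpr ((three_dvd_iff_norm_le _).mp hq), hqfix⟩
  exact Subtype.ext (sub_left_injective (hqs.trans hq₀.symm))

lemma ne_one_of_isFixedPt_contraction {z q : ℤ_[3]} (hz2 : (z : ℚ_[3]) - 2 ≠ 0)
    (hfix : Function.IsFixedPt (contraction z) ((q : ℚ_[3]) - 1)) : q ≠ 1 := by
  rintro rfl
  simp [Function.IsFixedPt, contraction, hz2] at hfix

lemma nine_dvd_of_isFixedPt_contraction {z q : ℤ_[3]} (hz2 : (z : ℚ_[3]) - 2 ≠ 0)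
    (hq : 3 ∣ q - 1) (hfix : Function.IsFixedPt (contraction z) ((q : ℚ_[3]) - 1)) :
    9 ∣ (z - 2) * (q - 1) + 3 := by
  have h : ((z : ℚ_[3]) - 2) * contraction z ((q : ℚ_[3]) - 1) + 3
      = -(3 * (((q : ℚ_[3]) - 1) ^ 2 * binomialSeries z 4 ((q : ℚ_[3]) - 1)) / mahler 2 z) := by
    rw [contraction]
    field_simp
    ring
  rw [hfix] at h
  have : ‖((z : ℚ_[3]) - 2) * ((q : ℚ_[3]) - 1) + 3‖ ≤ 1 / 9 := by
    rw [h, norm_neg]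
    exact norm_three_mul_div_le z ((three_dvd_iff_norm_le _).mp hq)
  rw [nine_dvd_iff_norm_le]
  exact_mod_cast this

lemma eq_self_iff_isFixedPt_contraction {f : ℤ_[3] → ℤ_[3]} (hf : Continuous f) {q : ℤ_[3]}
    (hfn : ∀ n : ℕ, f n = ∑ i ∈ range n, q ^ i) (hq : 3 ∣ q - 1) (hq1 : q ≠ 1) {z : ℤ_[3]}
    (hB : mahler 2 z ≠ 0) (hz2 : (z : ℚ_[3]) - 2 ≠ 0) :
    f z = z ↔ Function.IsFixedPt (contraction z) ((q : ℚ_[3]) - 1) := by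
  have hqn : ‖(q : ℚ_[3]) - 1‖ < 1 := ((three_dvd_iff_norm_le _).mp hq).trans_lt (by norm_num)
  exact (eq_self_iff_binomialSeries_two_eq_zero hf hfn hqn hq1 z).trans
    (isFixedPt_contraction_iff hB hz2 hqn).symm

end IotaFixedPoint

open IotaFixedPoint

/-- For `z ∈ ℤ_3` with `1 ≤ v_3(z(z−1)) < ∞` (i.e. `z ≠ 0, 1` and `3 ∣ z(z−1)`),
there is a unique `q ∈ 1 + 3ℤ_3`, `q ≠ 1`, with `ι_q(z) = z`; moreover any such `q`
satisfies `q ≡ 7 (mod 9)` if `3 ∣ z` and `q ≡ 4 (mod 9)` if `3 ∣ z − 1`. -/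
theorem exists_unique_q (ι : ℤ_[3] → ℤ_[3] → ℤ_[3])
    (hι : ∀ q : ℤ_[3], (3 : ℤ_[3]) ∣ q - 1 →
      Continuous (ι q) ∧ ∀ n : ℕ, ι q n = ∑ i ∈ Finset.range n, q ^ i)
    (z : ℤ_[3]) (hz0 : z ≠ 0) (hz1 : z ≠ 1) (hzv : (3 : ℤ_[3]) ∣ z * (z - 1)) :
    (∃! q : ℤ_[3], ((3 : ℤ_[3]) ∣ q - 1 ∧ q ≠ 1) ∧ ι q z = z) ∧
    (∀ q : ℤ_[3], (3 : ℤ_[3]) ∣ q - 1 → q ≠ 1 → ι q z = z →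
      (((3 : ℤ_[3]) ∣ z → (9 : ℤ_[3]) ∣ q - 7) ∧
       ((3 : ℤ_[3]) ∣ z - 1 → (9 : ℤ_[3]) ∣ q - 4))) := by
  have hz2 := norm_sub_two_eq_one hzv
  have hz2' : (z : ℚ_[3]) - 2 ≠ 0 := norm_ne_zero_iff.mp (by simp [hz2])
  have hB := mahler_two_ne_zero hz0 hz1
  have hfix_iff (q : ℤ_[3]) (hq : 3 ∣ q - 1) (hq1 : q ≠ 1) :=
    eq_self_iff_isFixedPt_contraction (hι q hq).1 (hι q hq).2 hq hq1 hB hz2'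
  obtain ⟨q₀, ⟨hq₀, hfix₀⟩, huniq⟩ := exists_unique_isFixedPt_contraction_sub_one hB hz2
  have hq₀1 := ne_one_of_isFixedPt_contraction hz2' hfix₀
  refine ⟨⟨q₀, ⟨⟨hq₀, hq₀1⟩, (hfix_iff q₀ hq₀ hq₀1).mpr hfix₀⟩, ?_⟩, fun q hq hq1 hqz => ?_⟩
  · rintro q ⟨⟨hq, hq1⟩, hqz⟩
    exact huniq q ⟨hq, (hfix_iff q hq hq1).mp hqz⟩
  · have h9 := nine_dvd_of_isFixedPt_contraction hz2' hq ((hfix_iff q hq hq1).mp hqz)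
    exact ⟨fun h => nine_dvd_sub_seven h hq h9, fun h => nine_dvd_sub_four h hq h9⟩
end

section
/- Let z ∈ ℤ_3 with v_0 = v_3(z(z−1)) satisfying 1 ≤ v_0 ≤ n − 2 for some n ≥ 3, and let q, q' ∈ 1 + 3ℤ_3 with q, q' ≢ 1 (mod 9). If ι_q(z) ≡ z (mod 3^n) and ι_{q'}(z) ≡ z (mod 3^n), then q ≡ q' (mod 3^{n−v_0}). -/
/-!
Pick a natural number `m` so close to `z` that `v₃(m(m-1)) = v₀` and, by continuity,
`ι_q(m) ≡ m ≡ ι_{q'}(m) (mod 3^n)`. At a natural number `ι_q` is a geometric sum, so for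
`q = 1 + 3u` the condition reads `3^{n+1} ∣ (1 + 3u)^m - 1 - 3mu`.

In the binomial expansion of `(1 + 3u)^m - (1 + 3u')^m - 3m(u - u')` the terms of degree `k ≥ 4`
are divisible by `3^{v₀+3}(u - u')`, because `C(m,k) C(k,2) = C(m,2) C(m-2,k-2)` and
`v₃(C(k,2)) ≤ k - 3`. Modulo `3^{v₀+3}` only the quadratic and cubic terms survive, and they
equal `3^{v₀+2}(u - u') c X / 2` with `m(m-1) = 3^{v₀} c` and
`X = u + u' + (m-2)(u² + uu' + u'²)`.
Taking `u' = 0` gives `(m-2)u ≡ -1 (mod 3)`, and likewise `(m-2)u' ≡ -1`; hence `(m-2)X ≡ 1`,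
so the cofactor of `u - u'` has valuation exactly `v₀ + 2` and `3^{n-v₀-1} ∣ u - u'`.
-/

open Finset

theorem Nat.factorization_choose_two_add_three_le {k : ℕ} (hk : 4 ≤ k) :
    (k.choose 2).factorization 3 + 3 ≤ k := by
  have hlog : Nat.log 3 k < k - 2 := by
    refine Nat.log_lt_of_lt_pow (by omega) ?_
    obtain ⟨j, rfl⟩ := Nat.exists_eq_add_of_le hk
    have := Nat.lt_pow_self (n := j) (by norm_num : 1 < 3)
    rw [show 4 + j - 2 = j + 2 by omega, pow_add]
    omega
  have := Nat.factorization_choose_le_log (p := 3) (n := k) (k := 2)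
  omega

theorem one_add_pow_eq_sum_range_four_add {R : Type*} [CommSemiring R] (m : ℕ) (x : R) :
    (1 + x) ^ m = ∑ k ∈ range 4, (m.choose k : R) * x ^ k +
      ∑ j ∈ range m, (m.choose (4 + j) : R) * x ^ (4 + j) := by
  rw [← sum_range_add, add_comm 1 x, add_pow]
  refine sum_subset (fun k hk => mem_range.2 (by have := mem_range.1 hk; omega))
    (fun k _ hk => ?_) |>.trans (sum_congr rfl fun k _ => by ring)
  simp [Nat.choose_eq_zero_of_lt (by simpa using hk : m < k)]

theorem Prime.pow_dvd_of_pow_add_dvd_pow_mul {M : Type*} [CommMonoidWithZero M]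
    [IsCancelMulZero M] {p x y : M} (hp : Prime p) {a b : ℕ} (hy : ¬ p ∣ y)
    (h : p ^ (a + b) ∣ p ^ a * (x * y)) :
    p ^ b ∣ x :=
  hp.pow_dvd_of_dvd_mul_right _ hy <|
    (mul_dvd_mul_iff_left (pow_ne_zero a hp.ne_zero)).1 (by rwa [← pow_add])

section CommRing

variable {R : Type*} [CommRing R]

theorem Prime.not_dvd_natCast_of_coprime {p w : ℕ} (hp : Prime (p : R)) (hpw : p.Coprime w) :
    ¬ (p : R) ∣ w := fun h =>
  hp.not_isUnit <| by
    simpa using (Nat.isCoprime_iff_coprime.2 hpw).intCast (R := R) |>.isUnit_of_dvd'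
      (by simp) (by simpa using h)

theorem Prime.not_three_dvd_two (h3 : Prime (3 : R)) : ¬ (3 : R) ∣ 2 := fun h =>
  h3.not_dvd_one (by simpa [show (3 : R) - 2 = 1 by norm_num] using dvd_sub (dvd_refl 3) h)

theorem Prime.not_three_dvd_add_add_mul_of_dvd (h3 : Prime (3 : R)) {a u u' : R}
    (hu : 3 ∣ 1 + a * u) (hu' : 3 ∣ 1 + a * u') :
    ¬ 3 ∣ u + u' + a * (u ^ 2 + u * u' + u' ^ 2) := by
  intro hX
  obtain ⟨s, hs⟩ := hu
  obtain ⟨s', hs'⟩ := hu'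
  -- Since `a u ≡ a u' ≡ -1 (mod 3)`, the bracket times `a` is `≡ 1 (mod 3)`.
  have h1 : (1 : R) = a * (u + u' + a * (u ^ 2 + u * u' + u' ^ 2)) -
      3 * (3 * s ^ 2 + 3 * s * s' + 3 * s' ^ 2 - 2 * s - 2 * s') := by
    linear_combination -(1 + a * u + (3 * s - 1) + a * u') * hs -
      (1 + (3 * s - 1) + a * u' + (3 * s' - 1)) * hs'
  exact h3.not_dvd_one (h1 ▸ dvd_sub (hX.mul_left a) (dvd_mul_right _ _))

theorem exists_eq_pow_mul_not_dvd_of_pow_succ_dvd_sub {p a b c : R} {v : ℕ}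
    (hb : b = p ^ v * c) (hc : ¬ p ∣ c) (hab : p ^ (v + 1) ∣ a - b) :
    ∃ c', a = p ^ v * c' ∧ ¬ p ∣ c' := by
  obtain ⟨d, hd⟩ := hab
  refine ⟨c + p * d, by linear_combination hd + hb, fun h => hc ?_⟩
  exact (dvd_add_left (dvd_mul_right p d)).1 h

theorem pow_succ_dvd_one_add_mul_pow_sub_of_geom_sum {p u : R} {m n : ℕ}
    (h : p ^ n ∣ ∑ i ∈ range m, (1 + p * u) ^ i - m) :
    p ^ (n + 1) ∣ (1 + p * u) ^ m - 1 - m * (p * u) := by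
  have hgeom := geom_sum_mul (1 + p * u) m
  rw [show (1 + p * u) ^ m - 1 - m * (p * u) = p * u * (∑ i ∈ range m, (1 + p * u) ^ i - m) by
    linear_combination -hgeom, pow_succ']
  exact mul_dvd_mul (dvd_mul_right p u) h

variable [IsDomain R]

theorem pow_add_two_dvd_choose_mul_pow (h3 : Prime (3 : R)) {m k v : ℕ}
    (hm : (3 : R) ^ v ∣ m.choose 2) (hk : 4 ≤ k) :
    (3 : R) ^ (v + 2) ∣ m.choose k * 3 ^ (k - 1) := by
  set e := (k.choose 2).factorization 3
  set w := k.choose 2 / 3 ^ e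
  have hw : ¬ (3 : R) ∣ w := by
    have hw3 : ¬ 3 ∣ w := Nat.not_dvd_ordCompl Nat.prime_three (Nat.choose_pos (by omega)).ne'
    exact_mod_cast Prime.not_dvd_natCast_of_coprime (R := R) (p := 3) (by exact_mod_cast h3)
      ((Nat.Prime.coprime_iff_not_dvd Nat.prime_three).2 hw3)
  have hmul : (m.choose k : R) * 3 ^ e * w = m.choose 2 * (m - 2).choose (k - 2) := by
    have hnat := Nat.choose_mul (n := m) (k := k) (by omega : 2 ≤ k)
    rw [← Nat.ordProj_mul_ordCompl_eq_self (k.choose 2) 3] at hnat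
    have hcast := congrArg (Nat.cast : ℕ → R) hnat
    push_cast at hcast
    linear_combination hcast
  have hdvd : (3 : R) ^ v ∣ m.choose k * 3 ^ e :=
    h3.pow_dvd_of_dvd_mul_right _ hw (hmul ▸ hm.mul_right _)
  have he := Nat.factorization_choose_two_add_three_le hk
  calc (3 : R) ^ (v + 2) ∣ m.choose k * 3 ^ e * 3 ^ 2 := by
        rw [pow_add]; exact mul_dvd_mul_right hdvd _
    _ ∣ m.choose k * 3 ^ (k - 1) := by
        rw [mul_assoc, ← pow_add]
        exact mul_dvd_mul_left _ (pow_dvd_pow _ (by omega))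

theorem two_mul_one_add_pow_sub_one_add_pow (h3 : Prime (3 : R)) {m v : ℕ} {c : R}
    (hm : (m : R) * (m - 1) = 3 ^ v * c) (u u' : R) :
    ∃ r, 2 * ((1 + 3 * u) ^ m - (1 + 3 * u') ^ m - m * (3 * u - 3 * u')) =
      3 ^ (v + 2) * ((u - u') *
        (c * (u + u' + ((m - 2 : ℕ) : R) * (u ^ 2 + u * u' + u' ^ 2)) + 3 * r)) := by
  have hC2 : (m.choose 2 : R) * 2 = 3 ^ v * c := by
    rw [← hm, ← Nat.cast_descFactorial_two, Nat.descFactorial_eq_factorial_mul_choose]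
    push_cast
    ring
  have hC3 : (m.choose 3 : R) * 3 = m.choose 2 * (m - 2 : ℕ) := by
    have h : m.choose 3 * 3 = m.choose 2 * (m - 2) := Nat.choose_succ_right_eq m 2
    simpa using congrArg (Nat.cast : ℕ → R) h
  have hdvdC2 : (3 : R) ^ v ∣ m.choose 2 :=
    h3.pow_dvd_of_dvd_mul_right _ h3.not_three_dvd_two ⟨c, hC2⟩
  obtain ⟨s, hs⟩ : 3 ^ (v + 3) * (u - u') ∣
      ∑ j ∈ range m, (m.choose (4 + j) : R) * ((3 * u) ^ (4 + j) - (3 * u') ^ (4 + j)) := by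
    refine dvd_sum fun j _ => ?_
    have hterm : (m.choose (4 + j) : R) * ((3 * u) ^ (4 + j) - (3 * u') ^ (4 + j)) =
        (m.choose (4 + j) * 3 ^ (4 + j - 1)) * (3 * (u ^ (4 + j) - u' ^ (4 + j))) := by
      rw [show 4 + j - 1 = 3 + j by omega]
      ring
    rw [hterm, show (3 : R) ^ (v + 3) * (u - u') = 3 ^ (v + 2) * (3 * (u - u')) by ring]
    exact mul_dvd_mul (pow_add_two_dvd_choose_mul_pow h3 hdvdC2 (k := 4 + j) (by omega))
      (mul_dvd_mul_left 3 (sub_dvd_pow_sub_pow _ _ _))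
  refine ⟨2 * s, ?_⟩
  simp only [mul_sub, sum_sub_distrib] at hs
  have hu := one_add_pow_eq_sum_range_four_add m (3 * u)
  have hu' := one_add_pow_eq_sum_range_four_add m (3 * u')
  simp only [sum_range_succ, sum_range_zero, Nat.choose_zero_right, Nat.choose_one_right] at hu hu'
  linear_combination 2 * hu - 2 * hu' + 2 * hs +
    (9 * (u ^ 2 - u' ^ 2) + 9 * ((m - 2 : ℕ) : R) * (u ^ 3 - u' ^ 3)) * hC2 +
    (18 * (u ^ 3 - u' ^ 3)) * hC3

theorem three_dvd_one_add_mul_of_pow_dvd (h3 : Prime (3 : R)) {m v : ℕ} {c u : R}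
    (hm : (m : R) * (m - 1) = 3 ^ v * c) (hc : ¬ 3 ∣ c) (hu : ¬ 3 ∣ u)
    (h : 3 ^ (v + 3) ∣ (1 + 3 * u) ^ m - 1 - m * (3 * u)) :
    3 ∣ 1 + ((m - 2 : ℕ) : R) * u := by
  obtain ⟨r, hr⟩ := two_mul_one_add_pow_sub_one_add_pow h3 hm u 0
  simp only [mul_zero, add_zero, sub_zero, one_pow, ne_eq, OfNat.ofNat_ne_zero,
    not_false_eq_true, zero_pow] at hr
  have hdvd :
      3 ^ (v + 2 + 1) ∣ 3 ^ (v + 2) * ((c * (u + (m - 2 : ℕ) * u ^ 2) + 3 * r) * u) := by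
    rw [mul_comm _ u, ← hr]
    exact h.mul_left 2
  have := h3.pow_dvd_of_pow_add_dvd_pow_mul hu hdvd
  rw [pow_one, dvd_add_left (dvd_mul_right 3 r)] at this
  rw [show c * (u + (m - 2 : ℕ) * u ^ 2) = c * u * (1 + (m - 2 : ℕ) * u) by ring] at this
  exact ((h3.dvd_or_dvd this).resolve_left fun h' => (h3.dvd_or_dvd h').elim hc hu)

theorem three_pow_dvd_sub_of_geom_sum_congr (h3 : Prime (3 : R)) {m v n : ℕ} {c q q' : R}
    (hm : (m : R) * (m - 1) = 3 ^ v * c) (hc : ¬ 3 ∣ c) (hn : v + 2 ≤ n)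
    (hq1 : 3 ∣ q - 1) (hq9 : ¬ 9 ∣ q - 1) (hq'1 : 3 ∣ q' - 1) (hq'9 : ¬ 9 ∣ q' - 1)
    (hfq : 3 ^ n ∣ ∑ i ∈ range m, q ^ i - m)
    (hfq' : 3 ^ n ∣ ∑ i ∈ range m, q' ^ i - m) :
    3 ^ (n - v) ∣ q - q' := by
  obtain ⟨u, rfl⟩ : ∃ u, q = 1 + 3 * u := by
    obtain ⟨u, hu⟩ := hq1; exact ⟨u, by rw [← hu]; ring⟩
  obtain ⟨u', rfl⟩ : ∃ u', q' = 1 + 3 * u' := by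
    obtain ⟨u', hu'⟩ := hq'1; exact ⟨u', by rw [← hu']; ring⟩
  have hu : ¬ 3 ∣ u := fun ⟨d, hd⟩ => hq9 ⟨d, by rw [hd]; ring⟩
  have hu' : ¬ 3 ∣ u' := fun ⟨d, hd⟩ => hq'9 ⟨d, by rw [hd]; ring⟩
  have hG := pow_succ_dvd_one_add_mul_pow_sub_of_geom_sum hfq
  have hG' := pow_succ_dvd_one_add_mul_pow_sub_of_geom_sum hfq'
  have hmu := three_dvd_one_add_mul_of_pow_dvd h3 hm hc hu ((pow_dvd_pow 3 (by omega)).trans hG)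
  have hmu' := three_dvd_one_add_mul_of_pow_dvd h3 hm hc hu' ((pow_dvd_pow 3 (by omega)).trans hG')
  have hX := h3.not_three_dvd_add_add_mul_of_dvd hmu hmu'
  obtain ⟨r, hr⟩ := two_mul_one_add_pow_sub_one_add_pow h3 hm u u'
  set X := u + u' + ((m - 2 : ℕ) : R) * (u ^ 2 + u * u' + u' ^ 2)
  have hY : ¬ 3 ∣ c * X + 3 * r :=
    fun h => (h3.dvd_or_dvd ((dvd_add_left (dvd_mul_right 3 r)).1 h)).elim hc hX
  have hdvd : 3 ^ (v + 2 + (n - v - 1)) ∣ 3 ^ (v + 2) * ((u - u') * (c * X + 3 * r)) := by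
    rw [← hr, show v + 2 + (n - v - 1) = n + 1 by omega]
    convert (dvd_sub hG hG').mul_left 2 using 2
    ring
  rw [show n - v = n - v - 1 + 1 by omega, pow_succ',
    show 1 + 3 * u - (1 + 3 * u') = 3 * (u - u') by ring]
  exact mul_dvd_mul_left 3 (h3.pow_dvd_of_pow_add_dvd_pow_mul hY hdvd)

end CommRing

theorem PadicInt.isOpen_setOf_pow_dvd (p : ℕ) [Fact p.Prime] (k : ℕ) :
    IsOpen {x : ℤ_[p] | (p : ℤ_[p]) ^ k ∣ x} := by
  have hball :
      {x : ℤ_[p] | (p : ℤ_[p]) ^ k ∣ x} = Metric.closedBall 0 ((p : ℝ) ^ (-k : ℤ)) := by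
    ext x
    rw [Set.mem_ofPred_eq, Metric.mem_closedBall, dist_zero_right,
      PadicInt.norm_le_pow_iff_mem_span_pow, Ideal.mem_span_singleton]
  rw [hball]
  exact IsUltrametricDist.isOpen_closedBall _
    (zpow_ne_zero _ (by exact_mod_cast (Fact.out : p.Prime).ne_zero))

theorem PadicInt.exists_eq_pow_valuation_mul_not_dvd {p : ℕ} [Fact p.Prime] {x : ℤ_[p]}
    (hx : x ≠ 0) : ∃ c, x = (p : ℤ_[p]) ^ x.valuation * c ∧ ¬ (p : ℤ_[p]) ∣ c :=
  ⟨PadicInt.unitCoeff hx, (PadicInt.unitCoeff_spec hx).trans (mul_comm _ _),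
    fun h => PadicInt.prime_p.not_isUnit (isUnit_of_dvd_unit h (Units.isUnit _))⟩

theorem q_unique_mod_general (ι : ℤ_[3] → ℤ_[3] → ℤ_[3])
    (hι : ∀ q : ℤ_[3], (3 : ℤ_[3]) ∣ q - 1 →
      Continuous (ι q) ∧ ∀ n : ℕ, ι q n = ∑ i ∈ Finset.range n, q ^ i)
    (n : ℕ) (hn : 3 ≤ n) (z : ℤ_[3]) (hzne : z * (z - 1) ≠ 0)
    (v₀ : ℕ) (hv₀ : (z * (z - 1)).valuation = (v₀ : ℤ))
    (hv₂ : v₀ ≤ n - 2)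
    (q q' : ℤ_[3])
    (hq1 : (3 : ℤ_[3]) ∣ q - 1) (hq9 : ¬ (9 : ℤ_[3]) ∣ q - 1)
    (hq'1 : (3 : ℤ_[3]) ∣ q' - 1) (hq'9 : ¬ (9 : ℤ_[3]) ∣ q' - 1)
    (hfq : (3 : ℤ_[3]) ^ n ∣ ι q z - z) (hfq' : (3 : ℤ_[3]) ^ n ∣ ι q' z - z) :
    (3 : ℤ_[3]) ^ (n - v₀) ∣ q - q' := by
  have h3 : Prime (3 : ℤ_[3]) := by exact_mod_cast PadicInt.prime_p (p := 3)
  obtain ⟨c, hzc, hc⟩ : ∃ c : ℤ_[3], z * (z - 1) = 3 ^ v₀ * c ∧ ¬ 3 ∣ c := by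
    obtain ⟨c, hzc, hc⟩ := PadicInt.exists_eq_pow_valuation_mul_not_dvd hzne
    exact ⟨c, by rw [hzc, show (z * (z - 1)).valuation = v₀ by exact_mod_cast hv₀]; norm_num,
      by exact_mod_cast hc⟩
  have hopen (k : ℕ) {f : ℤ_[3] → ℤ_[3]} (hf : Continuous f) :
      IsOpen {x | (3 : ℤ_[3]) ^ k ∣ f x} :=
    (PadicInt.isOpen_setOf_pow_dvd 3 k).preimage hf
  obtain ⟨m, ⟨hmq, hmq'⟩, hmz⟩ := PadicInt.denseRange_natCast.exists_mem_open
    (((hopen n (f := fun x => ι q x - x) ((hι q hq1).1.sub continuous_id)).inter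
      (hopen n (f := fun x => ι q' x - x) ((hι q' hq'1).1.sub continuous_id))).inter
      (hopen (v₀ + 1) (f := fun x => x - z) (continuous_id.sub continuous_const)))
    ⟨z, ⟨hfq, hfq'⟩, by simp⟩
  obtain ⟨c', hmc', hc'⟩ :=
    exists_eq_pow_mul_not_dvd_of_pow_succ_dvd_sub (a := (m : ℤ_[3]) * (m - 1)) hzc hc <| by
      rw [show (m : ℤ_[3]) * (m - 1) - z * (z - 1) = (m - z) * (m + z - 1) by ring]
      exact hmz.mul_right _
  rw [Set.mem_ofPred_eq, (hι q hq1).2] at hmq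
  rw [Set.mem_ofPred_eq, (hι q' hq'1).2] at hmq'
  exact three_pow_dvd_sub_of_geom_sum_congr h3 hmc' hc' (by omega) hq1 hq9 hq'1 hq'9 hmq hmq'

/-- Uniqueness part of "Existence of q": if `1 ≤ v₀ = v_3(z(z−1)) ≤ n − 2`, `n ≥ 3`,
and `q, q' ∈ 1 + 3ℤ_3` with `q, q' ≢ 1 (mod 9)` both satisfy `ι(z) ≡ z (mod 3^n)`,
then `q ≡ q' (mod 3^{n−v₀})`. -/
theorem q_unique_mod (ι : ℤ_[3] → ℤ_[3] → ℤ_[3])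
    (hι : ∀ q : ℤ_[3], (3 : ℤ_[3]) ∣ q - 1 →
      Continuous (ι q) ∧ ∀ n : ℕ, ι q n = ∑ i ∈ Finset.range n, q ^ i)
    (n : ℕ) (hn : 3 ≤ n) (z : ℤ_[3]) (hzne : z * (z - 1) ≠ 0)
    (v₀ : ℕ) (hv₀ : (z * (z - 1)).valuation = (v₀ : ℤ))
    (hv₁ : 1 ≤ v₀) (hv₂ : v₀ ≤ n - 2)
    (q q' : ℤ_[3])
    (hq1 : (3 : ℤ_[3]) ∣ q - 1) (hq9 : ¬ (9 : ℤ_[3]) ∣ q - 1)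
    (hq'1 : (3 : ℤ_[3]) ∣ q' - 1) (hq'9 : ¬ (9 : ℤ_[3]) ∣ q' - 1)
    (hfq : (3 : ℤ_[3]) ^ n ∣ ι q z - z) (hfq' : (3 : ℤ_[3]) ^ n ∣ ι q' z - z) :
    (3 : ℤ_[3]) ^ (n - v₀) ∣ q - q' :=
  q_unique_mod_general ι hι n hn z hzne v₀ hv₀ hv₂ q q' hq1 hq9 hq'1 hq'9 hfq hfq'
end
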